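/- arXiv:1410.7595 — 7 statements merged into one kernel-verified Lean document; each statement's English description precedes it below -/
import Mathlib

section
/- For every timelike vector v ∈ A at which the fundamental tensor g_v is nondegenerate, one has g_v(v,v) = L(v) > 0, and g_v is negative definite on the g_v-orthogonal hyperplane of v: for every w ∈ V with w ≠ 0 and g_v(v,w) = 0 one has g_v(w,w) < 0. In particular g_v has index n−1, i.e. its maximal negative-definite subspaces have dimension n−1 (this is Proposition 2.2(i): the indicatrix {u ∈ A : L(u) = 1} is strongly convex). -/
open Set

/-- The fundamental tensor of `L` at `v`: `g_v(u,w) = (1/2)·D²L(v)(u,w)`. -/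
noncomputable def fundamentalTensor {V : Type} [NormedAddCommGroup V] [NormedSpace ℝ V]
    (L : V → ℝ) (v u w : V) : ℝ :=
  (1 / 2) * iteratedFDeriv ℝ 2 L v ![u, w]

set_option maxHeartbeats 1600000

/-- Proposition 2.2(i): for a timelike vector `v ∈ A` with nondegenerate fundamental
tensor `g_v`, one has `g_v(v,v) = L(v) > 0`, `g_v` is negative definite on the
`g_v`-orthogonal hyperplane of `v`, and `g_v` has index `n - 1`. -/
theorem finsler_fundamental_tensor_index_timelike
    {V : Type} [NormedAddCommGroup V] [NormedSpace ℝ V] [FiniteDimensional ℝ V]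
    {n : ℕ} (hn : 2 ≤ n) (hdim : Module.finrank ℝ V = n)
    (A : Set V) (hA_open : IsOpen A) (hA_ne : A.Nonempty)
    (hA0 : (0 : V) ∉ A) (hA_conv : Convex ℝ A)
    (hA_cone : ∀ v ∈ A, ∀ t : ℝ, 0 < t → t • v ∈ A)
    (hA_salient : ∀ v : V, v ∈ closure A → -v ∈ closure A → v = 0)
    (Astar : Set V) (hAstar_open : IsOpen Astar) (hAstar0 : (0 : V) ∉ Astar)
    (hAstar_cone : ∀ v ∈ Astar, ∀ t : ℝ, 0 < t → t • v ∈ Astar)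
    (hAhat_sub : closure A \ {0} ⊆ Astar)
    (L : V → ℝ)
    (hL_smooth : ∀ v ∈ Astar, ContDiffAt ℝ (⊤ : ℕ∞) L v)
    (hL_homog : ∀ v ∈ Astar, ∀ t : ℝ, 0 < t → L (t • v) = t ^ 2 * L v)
    (hL_pos : ∀ v ∈ A, 0 < L v)
    (hL_null : ∀ v ∈ closure A \ A, v ≠ 0 → L v = 0)
    (hL_conv : Convex ℝ {v ∈ A | 1 ≤ L v})
    (hg_nondeg : ∀ v ∈ closure A \ A, v ≠ 0 →
      ∀ u : V, (∀ w : V, fundamentalTensor L v u w = 0) → u = 0)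
    (v : V) (hv : v ∈ A)
    (hv_nondeg : ∀ u : V, (∀ w : V, fundamentalTensor L v u w = 0) → u = 0) :
    fundamentalTensor L v v v = L v ∧ 0 < L v ∧
    (∀ w : V, w ≠ 0 → fundamentalTensor L v v w = 0 → fundamentalTensor L v w w < 0) ∧
    (∃ W : Submodule ℝ V, Module.finrank ℝ W = n - 1 ∧
      ∀ w ∈ W, w ≠ 0 → fundamentalTensor L v w w < 0) ∧
    (∀ W : Submodule ℝ V, (∀ w ∈ W, w ≠ 0 → fundamentalTensor L v w w < 0) →
      Module.finrank ℝ W ≤ n - 1) := by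
  classical
  -- Basic set inclusions
  have hAsub : A ⊆ Astar := fun u hu =>
    hAhat_sub ⟨subset_closure hu, by simp; intro h; exact hA0 (h ▸ hu)⟩
  have hvA : v ∈ Astar := hAsub hv
  have hLv : 0 < L v := hL_pos v hv
  set f' : V → (V →L[ℝ] ℝ) := fderiv ℝ L with hf'def
  set f'' : V →L[ℝ] (V →L[ℝ] ℝ) := fderiv ℝ f' v with hf''def
  have hdiff : ∀ u ∈ Astar, HasFDerivAt L (f' u) u := fun u hu =>
    ((hL_smooth u hu).differentiableAt (by simp)).hasFDerivAt
  have hf''d : HasFDerivAt f' f'' v :=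
    (((hL_smooth v hvA).fderiv_right (m := 1) (by norm_cast)).differentiableAt one_ne_zero).hasFDerivAt
  have hsymm : ∀ a b : V, f'' a b = f'' b a := by
    intro a b
    refine second_derivative_symmetric_of_eventually (f := L) ?_ hf''d a b
    filter_upwards [hAstar_open.mem_nhds hvA] with u hu using hdiff u hu
  have hB : ∀ a b : V, fundamentalTensor L v a b = 1 / 2 * f'' a b := by
    intro a b
    simp [fundamentalTensor, iteratedFDeriv_two_apply, hf''def, hf'def]
  -- Euler's identity: f' u u = 2 L u on Astar
  have hE1 : ∀ u ∈ Astar, f' u u = 2 * L u := by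
    intro u hu
    have hg : HasDerivAt (fun t : ℝ => t • u) u 1 := by
      simpa using (hasDerivAt_id (1 : ℝ)).smul_const u
    have hF : HasFDerivAt L (f' u) ((1 : ℝ) • u) := by rw [one_smul]; exact hdiff u hu
    have h1 : HasDerivAt (fun t : ℝ => L (t • u)) (f' u u) 1 := hF.comp_hasDerivAt 1 hg
    have h2 : HasDerivAt (fun t : ℝ => t ^ 2 * L u) (2 * L u) 1 := by
      simpa using (hasDerivAt_pow 2 (1 : ℝ)).mul_const (L u)
    have heq : (fun t : ℝ => L (t • u)) =ᶠ[nhds (1 : ℝ)] fun t => t ^ 2 * L u := by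
      filter_upwards [isOpen_Ioi.mem_nhds (show (0 : ℝ) < 1 by norm_num)] with t ht
      exact hL_homog u hu t ht
    exact (h1.congr_of_eventuallyEq heq.symm).unique h2
  -- differentiating Euler's identity: f'' w v = f' v w
  have hE2 : ∀ w : V, f'' w v = f' v w := by
    intro w
    have h1 : HasFDerivAt (fun y : V => f' y y)
        ((f' v).comp (ContinuousLinearMap.id ℝ V) + f''.flip v) v :=
      hf''d.clm_apply (hasFDerivAt_id v)
    have h2 : HasFDerivAt (fun y : V => 2 * L y) ((2 : ℝ) • f' v) v :=
      (hdiff v hvA).const_mul 2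
    have heq : (fun y : V => f' y y) =ᶠ[nhds v] fun y => 2 * L y := by
      filter_upwards [hAstar_open.mem_nhds hvA] with u hu using hE1 u hu
    have h3 := (h1.congr_of_eventuallyEq heq.symm).unique h2
    have h4 := congrArg (fun T : V →L[ℝ] ℝ => T w) h3
    simp only [ContinuousLinearMap.add_apply, ContinuousLinearMap.coe_comp',
      Function.comp_apply, ContinuousLinearMap.coe_id', id_eq,
      ContinuousLinearMap.flip_apply, ContinuousLinearMap.smul_apply, smul_eq_mul] at h4
    linarith
  have hvv : f'' v v = 2 * L v := by rw [hE2 v]; exact hE1 v hvA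
  -- superadditivity of √L on A
  have hsuper : ∀ u₁ ∈ A, ∀ u₂ ∈ A,
      (Real.sqrt (L u₁) + Real.sqrt (L u₂)) ^ 2 ≤ L (u₁ + u₂) := by
    intro u₁ h₁ u₂ h₂
    set F₁ := Real.sqrt (L u₁) with hF₁def
    set F₂ := Real.sqrt (L u₂) with hF₂def
    have hL₁ : 0 < L u₁ := hL_pos u₁ h₁
    have hL₂ : 0 < L u₂ := hL_pos u₂ h₂
    have hF₁ : 0 < F₁ := Real.sqrt_pos.2 hL₁
    have hF₂ : 0 < F₂ := Real.sqrt_pos.2 hL₂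
    have hF₁sq : F₁ ^ 2 = L u₁ := Real.sq_sqrt hL₁.le
    have hF₂sq : F₂ ^ 2 = L u₂ := Real.sq_sqrt hL₂.le
    have ha₁ : F₁⁻¹ • u₁ ∈ A := hA_cone u₁ h₁ F₁⁻¹ (by positivity)
    have ha₂ : F₂⁻¹ • u₂ ∈ A := hA_cone u₂ h₂ F₂⁻¹ (by positivity)
    have hLa₁ : L (F₁⁻¹ • u₁) = 1 := by
      rw [hL_homog u₁ (hAsub h₁) F₁⁻¹ (by positivity), ← hF₁sq]
      field_simp
    have hLa₂ : L (F₂⁻¹ • u₂) = 1 := by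
      rw [hL_homog u₂ (hAsub h₂) F₂⁻¹ (by positivity), ← hF₂sq]
      field_simp
    have hm : (F₁ / (F₁ + F₂)) • (F₁⁻¹ • u₁) + (F₂ / (F₁ + F₂)) • (F₂⁻¹ • u₂) ∈
        {u ∈ A | 1 ≤ L u} := by
      refine hL_conv ⟨ha₁, hLa₁.ge⟩ ⟨ha₂, hLa₂.ge⟩ (by positivity) (by positivity) ?_
      field_simp
    have hmeq : (F₁ / (F₁ + F₂)) • (F₁⁻¹ • u₁) + (F₂ / (F₁ + F₂)) • (F₂⁻¹ • u₂) =
        (F₁ + F₂)⁻¹ • (u₁ + u₂) := by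
      have hc₁ : F₁ / (F₁ + F₂) * F₁⁻¹ = (F₁ + F₂)⁻¹ := by field_simp
      have hc₂ : F₂ / (F₁ + F₂) * F₂⁻¹ = (F₁ + F₂)⁻¹ := by field_simp
      rw [smul_smul, smul_smul, hc₁, hc₂, smul_add]
    rw [hmeq] at hm
    obtain ⟨hmA, hmL⟩ := hm
    have hsum : u₁ + u₂ = (F₁ + F₂) • ((F₁ + F₂)⁻¹ • (u₁ + u₂)) := by
      rw [smul_smul]; field_simp; rw [one_smul]
    calc (F₁ + F₂) ^ 2 = (F₁ + F₂) ^ 2 * 1 := by ring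
    _ ≤ (F₁ + F₂) ^ 2 * L ((F₁ + F₂)⁻¹ • (u₁ + u₂)) := by
        apply mul_le_mul_of_nonneg_left hmL (by positivity)
    _ = L (u₁ + u₂) := by
        rw [← hL_homog _ (hAsub hmA) (F₁ + F₂) (by positivity), ← hsum]
  -- key: negative semidefiniteness on the orthogonal of v
  have hneg : ∀ w : V, f'' v w = 0 → f'' w w ≤ 0 := by
    intro w hw0
    by_contra hcon
    push_neg at hcon
    set γ : ℝ → V := fun t => v + t • w with hγdef
    have hγcont : Continuous γ := by fun_prop
    have hγ0 : γ 0 = v := by simp [hγdef]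
    obtain ⟨δ₁, hδ₁, h₁⟩ : ∃ δ > 0, ∀ t : ℝ, |t| < δ → γ t ∈ A := by
      have : γ ⁻¹' A ∈ nhds (0 : ℝ) :=
        (hA_open.preimage hγcont).mem_nhds (by simp [hγ0, hv])
      rcases Metric.mem_nhds_iff.1 this with ⟨ε, hε, hball⟩
      exact ⟨ε, hε, fun t ht => hball (by simpa [Real.dist_eq] using ht)⟩
    set ψ : ℝ → ℝ := fun t => f' (γ t) w with hψdef
    have hγd : ∀ t : ℝ, γ t ∈ Astar → HasDerivAt (fun s => L (γ s)) (ψ t) t := by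
      intro t ht
      have hg : HasDerivAt γ w t := by
        have := ((hasDerivAt_id t).smul_const w).const_add v; simp only [one_smul] at this; exact this
      exact (hdiff (γ t) ht).comp_hasDerivAt t hg
    have hψ0 : ψ 0 = 0 := by
      have : f' v w = f'' w v := (hE2 w).symm
      rw [hψdef]; simp only [hγ0]
      rw [this, ← hsymm v w, hw0]
    have hψd : HasDerivAt ψ (f'' w w) 0 := by
      have happ : HasFDerivAt (fun u : V => f' u w)
          ((ContinuousLinearMap.apply ℝ ℝ w).comp f'') v :=
        ((ContinuousLinearMap.apply ℝ ℝ w).hasFDerivAt).comp v hf''d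
      have hg : HasDerivAt γ w 0 := by
        have := ((hasDerivAt_id (0:ℝ)).smul_const w).const_add v; simp only [one_smul] at this; exact this
      have := (hγ0 ▸ happ).comp_hasDerivAt 0 hg
      exact this
    obtain ⟨δ₂, hδ₂, h₂⟩ : ∃ δ > 0, ∀ t : ℝ, t ≠ 0 → |t| < δ → 0 < ψ t / t := by
      have hslope := hasDerivAt_iff_tendsto_slope.1 hψd
      have hev : ∀ᶠ t in nhdsWithin (0:ℝ) {(0:ℝ)}ᶜ, 0 < slope ψ 0 t :=
        hslope (IsOpen.mem_nhds isOpen_Ioi hcon)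
      rcases Metric.mem_nhdsWithin_iff.1 hev with ⟨ε, hε, hball⟩
      refine ⟨ε, hε, fun t ht hlt => ?_⟩
      have h := hball ⟨by simpa [Real.dist_eq] using hlt, ht⟩
      simp only [slope, hψ0, vsub_eq_sub, sub_zero] at h
      rw [div_eq_inv_mul]
      simpa using h
    set ε := min δ₁ δ₂ with hεdef
    have hε : 0 < ε := lt_min hδ₁ hδ₂
    have hmemA : ∀ t : ℝ, |t| < ε → γ t ∈ A := fun t ht =>
      h₁ t (lt_of_lt_of_le ht (min_le_left _ _))
    have hψpos : ∀ t : ℝ, 0 < t → t < ε → 0 < ψ t := by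
      intro t ht hlt
      have := h₂ t ht.ne' (by rw [abs_of_pos ht]; exact lt_of_lt_of_le hlt (min_le_right _ _))
      calc (0:ℝ) = (ψ t / t) * 0 := by ring
      _ < (ψ t / t) * t := by exact mul_lt_mul_of_pos_left ht this
      _ = ψ t := div_mul_cancel₀ (ψ t) ht.ne'
    have hψneg : ∀ t : ℝ, -ε < t → t < 0 → ψ t < 0 := by
      intro t ht hlt
      have habs : |t| < δ₂ := by
        rw [abs_of_neg hlt]; exact lt_of_lt_of_le (by linarith) (min_le_right _ _)
      have := h₂ t hlt.ne habs
      have h' : ψ t = (ψ t / t) * t := (div_mul_cancel₀ (ψ t) hlt.ne).symm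
      rw [h']
      exact mul_neg_of_pos_of_neg this hlt
    have hcontA : ∀ t : ℝ, |t| < ε → ContinuousAt (fun s => L (γ s)) t := fun t ht =>
      (hγd t (hAsub (hmemA t ht))).continuousAt
    have hderiv : ∀ t : ℝ, |t| < ε → deriv (fun s => L (γ s)) t = ψ t := fun t ht =>
      (hγd t (hAsub (hmemA t ht))).deriv
    have hmono : StrictMonoOn (fun s => L (γ s)) (Ico 0 (ε/2 + ε/4)) := by
      apply strictMonoOn_of_deriv_pos (convex_Ico _ _)
      · intro t ht
        refine (hcontA t ?_).continuousWithinAt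
        rw [abs_of_nonneg ht.1]; linarith [ht.2]
      · intro t ht
        rw [interior_Ico] at ht
        have habs : |t| < ε := by rw [abs_of_pos ht.1]; linarith [ht.2]
        rw [hderiv t habs]
        exact hψpos t ht.1 (by linarith [ht.2])
    have hanti : StrictAntiOn (fun s => L (γ s)) (Ioc (-(ε/2 + ε/4)) 0) := by
      apply strictAntiOn_of_deriv_neg (convex_Ioc _ _)
      · intro t ht
        refine (hcontA t ?_).continuousWithinAt
        rw [abs_of_nonpos ht.2]; linarith [ht.1]
      · intro t ht
        rw [interior_Ioc] at ht
        have habs : |t| < ε := by rw [abs_of_neg ht.2]; linarith [ht.1]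
        rw [hderiv t habs]
        exact hψneg t (by linarith [ht.1]) ht.2
    set t₀ := ε / 2 with ht₀def
    have ht₀pos : 0 < t₀ := by rw [ht₀def]; positivity
    have ht₀lt : t₀ < ε / 2 + ε / 4 := by rw [ht₀def]; linarith
    have ht₀lt' : t₀ < ε := by rw [ht₀def]; linarith
    have h0mem : (0 : ℝ) ∈ Ico (0 : ℝ) (ε / 2 + ε / 4) := ⟨le_refl _, by linarith⟩
    have htmem : t₀ ∈ Ico (0 : ℝ) (ε / 2 + ε / 4) := ⟨ht₀pos.le, ht₀lt⟩
    have h0mem' : (0 : ℝ) ∈ Ioc (-(ε / 2 + ε / 4)) (0 : ℝ) := ⟨by linarith, le_refl _⟩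
    have htmem' : -t₀ ∈ Ioc (-(ε / 2 + ε / 4)) (0 : ℝ) := ⟨by linarith, by linarith⟩
    have hp : L v < L (γ t₀) := by
      have := hmono h0mem htmem ht₀pos
      simpa [hγ0] using this
    have hq : L v < L (γ (-t₀)) := by
      have := hanti htmem' h0mem' (by linarith)
      simpa [hγ0] using this
    have hu₁ : γ t₀ ∈ A := hmemA t₀ (by rw [abs_of_pos ht₀pos]; exact ht₀lt')
    have hu₂ : γ (-t₀) ∈ A := hmemA (-t₀) (by rw [abs_neg, abs_of_pos ht₀pos]; exact ht₀lt')
    have hsum : γ t₀ + γ (-t₀) = (2 : ℝ) • v := by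
      show (v + t₀ • w) + (v + (-t₀) • w) = (2 : ℝ) • v
      rw [two_smul, neg_smul]
      abel
    have h4 : L ((2:ℝ) • v) = 4 * L v := by
      rw [hL_homog v hvA 2 (by norm_num)]; ring
    have hs := hsuper (γ t₀) hu₁ (γ (-t₀)) hu₂
    rw [hsum, h4] at hs
    have hsq₁ : Real.sqrt (L v) < Real.sqrt (L (γ t₀)) := Real.sqrt_lt_sqrt hLv.le hp
    have hsq₂ : Real.sqrt (L v) < Real.sqrt (L (γ (-t₀))) := Real.sqrt_lt_sqrt hLv.le hq
    have hsv : Real.sqrt (L v) ^ 2 = L v := Real.sq_sqrt hLv.le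
    have hsvpos : 0 < Real.sqrt (L v) := Real.sqrt_pos.2 hLv
    nlinarith [hsq₁, hsq₂, hs, hsv, hsvpos]
  -- strict negativity using nondegeneracy
  have hstrict : ∀ w : V, w ≠ 0 → f'' v w = 0 → f'' w w < 0 := by
    intro w hw hw0
    rcases lt_or_eq_of_le (hneg w hw0) with h | hzero
    · exact h
    exfalso
    apply hw
    apply hv_nondeg
    intro u'
    rw [hB]
    suffices h : ∀ u : V, f'' w u = 0 by rw [h u']; ring
    have hprod : ∀ u : V, f'' v u = 0 → f'' w u = 0 := by
      intro u hu
      by_contra hne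
      have hq : ∀ t : ℝ, 2 * t * f'' w u + t ^ 2 * f'' u u ≤ 0 := by
        intro t
        have h1 : f'' v (w + t • u) = 0 := by
          rw [map_add, map_smul, hu, hw0]; simp
        have h2 := hneg _ h1
        have hexp : f'' (w + t • u) (w + t • u) =
            f'' w w + t * f'' w u + t * f'' u w + t ^ 2 * f'' u u := by
          rw [map_add, map_smul]
          simp [ContinuousLinearMap.add_apply, map_add, map_smul]
          ring
        rw [hexp, ← hzero, hsymm u w] at h2
        linarith
      have huu := hneg u hu
      rcases lt_or_eq_of_le huu with hlt | he
      · set a := f'' w u with ha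
        set b := f'' u u with hb
        have h := hq (a / (-b))
        have hval : 2 * (a / (-b)) * a + (a / (-b)) ^ 2 * b = -(a ^ 2 / b) := by
          have hbne : b ≠ 0 := hlt.ne
          rw [div_neg]
          field_simp
          ring
        rw [hval] at h
        have ha2 : 0 < a ^ 2 := by positivity
        have : a ^ 2 / b < 0 := div_neg_of_pos_of_neg ha2 hlt
        linarith
      · have h := hq (f'' w u)
        rw [he] at h
        have h2 : 0 < (f'' w u) ^ 2 := by
          rw [← sq_abs]; exact pow_pos (abs_pos.2 hne) 2
        nlinarith [h, h2]
    intro u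
    set c := f'' v u / f'' v v with hc
    have hvv0 : f'' v v ≠ 0 := by rw [hvv]; positivity
    have h1 : f'' v (u - c • v) = 0 := by
      rw [map_sub, map_smul, hc, smul_eq_mul]
      field_simp; ring
    have h2 := hprod _ h1
    rw [map_sub, map_smul] at h2
    have h3 : f'' w v = 0 := by rw [← hsymm v w, hw0]
    rw [h3] at h2
    simpa using h2
  have hfvv : fundamentalTensor L v v v = L v := by rw [hB, hvv]; ring
  have hstrictF : ∀ w : V, w ≠ 0 → fundamentalTensor L v v w = 0 →
      fundamentalTensor L v w w < 0 := by
    intro w hw h0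
    rw [hB] at h0 ⊢
    have : f'' v w = 0 := by linarith
    have := hstrict w hw this
    linarith
  refine ⟨hfvv, hLv, hstrictF, ?_, ?_⟩
  · -- existence of negative-definite subspace of dim n-1
    set ℓ : V →ₗ[ℝ] ℝ := (f'' v : V →ₗ[ℝ] ℝ) with hℓ
    have hℓv : ℓ v = 2 * L v := hvv
    have hℓne : ℓ ≠ 0 := by
      intro h
      have : ℓ v = 0 := by rw [h]; rfl
      rw [hℓv] at this; linarith
    refine ⟨LinearMap.ker ℓ, ?_, ?_⟩
    · have h := Module.Dual.finrank_ker_add_one_of_ne_zero hℓne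
      rw [hdim] at h
      omega
    · intro w hw hwne
      have h0 : f'' v w = 0 := LinearMap.mem_ker.1 hw
      exact hstrictF w hwne (by rw [hB, h0]; ring)
  · intro W hW
    have hvne : v ≠ 0 := fun h => hA0 (h ▸ hv)
    have hd : Disjoint W (Submodule.span ℝ {v}) := by
      rw [Submodule.disjoint_def]
      intro x hxW hxS
      by_contra hx
      rcases Submodule.mem_span_singleton.1 hxS with ⟨c, rfl⟩
      have hc : c ≠ 0 := fun h => hx (by rw [h, zero_smul])
      have hlt := hW _ hxW hx
      have : fundamentalTensor L v (c • v) (c • v) = c ^ 2 * L v := by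
        rw [hB, map_smul]
        simp only [ContinuousLinearMap.coe_smul', Pi.smul_apply, map_smul, smul_eq_mul]
        rw [hvv]; ring
      rw [this] at hlt
      nlinarith [sq_nonneg c, hLv, hlt, pow_pos (abs_pos.2 hc) 2]
    have h1 := Submodule.finrank_sup_add_finrank_inf_eq W (Submodule.span ℝ {v})
    rw [hd.eq_bot, finrank_bot, finrank_span_singleton hvne] at h1
    have h2 : Module.finrank ℝ ↥(W ⊔ Submodule.span ℝ {v}) ≤ n := by
      rw [← hdim]; exact Submodule.finrank_le _
    omega
end

section
/- For every lightlike vector v ∈ Â \ A: L(v) = 0 = g_v(v,v), the Fréchet differential of L at v satisfies DL(v)(w) = 2·g_v(v,w) for every w ∈ V, and DL(v) ≠ 0; consequently v is a regular point of L, so the lightcone {u ∈ A* : L(u) = 0} is near v the zero level set of a submersion, and its tangent space at v equals {w ∈ V : g_v(v,w) = 0} (this is Proposition 2.2(ii)). -/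
open Set

/-- Proposition 2.2(ii): for a lightlike vector `v`, `L(v) = 0 = g_v(v,v)`, the
differential of `L` at `v` is `w ↦ 2 g_v(v,w)`, it is nonzero (so `v` is a regular
point of `L` and the lightcone is locally the zero level set of a submersion), and
the tangent space of the lightcone at `v`, i.e. the kernel of `DL(v)`, equals
`{w | g_v(v,w) = 0}`. -/
theorem finsler_lightcone_tangent_space
    {V : Type} [NormedAddCommGroup V] [NormedSpace ℝ V] [FiniteDimensional ℝ V]
    {n : ℕ} (hn : 2 ≤ n) (hdim : Module.finrank ℝ V = n)
    (A : Set V) (hA_open : IsOpen A) (hA_ne : A.Nonempty)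
    (hA0 : (0 : V) ∉ A) (hA_conv : Convex ℝ A)
    (hA_cone : ∀ v ∈ A, ∀ t : ℝ, 0 < t → t • v ∈ A)
    (hA_salient : ∀ v : V, v ∈ closure A → -v ∈ closure A → v = 0)
    (Astar : Set V) (hAstar_open : IsOpen Astar) (hAstar0 : (0 : V) ∉ Astar)
    (hAstar_cone : ∀ v ∈ Astar, ∀ t : ℝ, 0 < t → t • v ∈ Astar)
    (hAhat_sub : closure A \ {0} ⊆ Astar)
    (L : V → ℝ)
    (hL_smooth : ∀ v ∈ Astar, ContDiffAt ℝ (⊤ : ℕ∞) L v)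
    (hL_homog : ∀ v ∈ Astar, ∀ t : ℝ, 0 < t → L (t • v) = t ^ 2 * L v)
    (hL_pos : ∀ v ∈ A, 0 < L v)
    (hL_null : ∀ v ∈ closure A \ A, v ≠ 0 → L v = 0)
    (hL_conv : Convex ℝ {v ∈ A | 1 ≤ L v})
    (hg_nondeg : ∀ v ∈ closure A \ A, v ≠ 0 →
      ∀ u : V, (∀ w : V, fundamentalTensor L v u w = 0) → u = 0)
    (v : V) (hv : v ∈ closure A \ A) (hv0 : v ≠ 0) :
    L v = 0 ∧ fundamentalTensor L v v v = 0 ∧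
    (∀ w : V, fderiv ℝ L v w = 2 * fundamentalTensor L v v w) ∧
    fderiv ℝ L v ≠ 0 ∧
    (∀ w : V, fderiv ℝ L v w = 0 ↔ fundamentalTensor L v v w = 0) := by
  have hvA : v ∈ closure A := hv.1
  have hvStar : v ∈ Astar := hAhat_sub ⟨hvA, by simp [hv0]⟩
  have hnhds : Astar ∈ nhds v := hAstar_open.mem_nhds hvStar
  have hdL : ∀ x ∈ Astar, DifferentiableAt ℝ L x := fun x hx =>
    (hL_smooth x hx).differentiableAt (by simp)
  have hdfd : DifferentiableAt ℝ (fderiv ℝ L) v := by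
    have h2 : ContDiffAt ℝ 2 L v := (hL_smooth v hvStar).of_le (WithTop.coe_le_coe.mpr le_top)
    exact (h2.fderiv_right (m := 1) (by norm_num)).differentiableAt one_ne_zero
  -- homogeneity of fderiv
  have hfd_homog : ∀ t : ℝ, 0 < t → ∀ w : V,
      fderiv ℝ L (t • v) w = t * fderiv ℝ L v w := by
    intro t ht w
    have heq : (fun x => L (t • x)) =ᶠ[nhds v] fun x => t ^ 2 * L x := by
      filter_upwards [hnhds] with x hx
      exact hL_homog x hx t ht
    have htv : t • v ∈ Astar := hAstar_cone v hvStar t ht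
    have hi : HasFDerivAt (fun x : V => t • x)
        (t • ContinuousLinearMap.id ℝ V) v := (hasFDerivAt_id v).const_smul t
    have hcomp : HasFDerivAt (fun x => L (t • x))
        ((fderiv ℝ L (t • v)).comp (t • ContinuousLinearMap.id ℝ V)) v :=
      ((hdL _ htv).hasFDerivAt).comp v hi
    have h1 : fderiv ℝ (fun x => L (t • x)) v = fderiv ℝ (fun x => t ^ 2 * L x) v :=
      heq.fderiv_eq
    have h2 : fderiv ℝ (fun x => t ^ 2 * L x) v = t ^ 2 • fderiv ℝ L v :=
      fderiv_const_mul (hdL v hvStar) _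
    have h3 := hcomp.fderiv
    have h4 : ((fderiv ℝ L (t • v)).comp (t • ContinuousLinearMap.id ℝ V)) w
        = (t ^ 2 • fderiv ℝ L v) w := by rw [← h3, h1, h2]
    simp only [ContinuousLinearMap.comp_apply, ContinuousLinearMap.smul_apply,
      ContinuousLinearMap.id_apply, map_smul, smul_eq_mul] at h4
    have ht' : t ≠ 0 := ne_of_gt ht
    apply mul_left_cancel₀ ht'
    rw [h4]; ring
  -- key identity : D²L(v)(v,w) = DL(v)(w)
  have hkey : ∀ w : V, fderiv ℝ (fderiv ℝ L) v v w = fderiv ℝ L v w := by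
    intro w
    have hev : HasFDerivAt (fun u => fderiv ℝ L u w)
        ((ContinuousLinearMap.apply ℝ ℝ w).comp (fderiv ℝ (fderiv ℝ L) v)) v :=
      (ContinuousLinearMap.apply ℝ ℝ w).hasFDerivAt.comp v hdfd.hasFDerivAt
    have hin : HasDerivAt (fun t : ℝ => t • v) v 1 := by
      simpa using (hasDerivAt_id (1 : ℝ)).smul_const v
    have hev' : HasFDerivAt (fun u => fderiv ℝ L u w)
        ((ContinuousLinearMap.apply ℝ ℝ w).comp (fderiv ℝ (fderiv ℝ L) v))
        ((1 : ℝ) • v) := by rw [one_smul]; exact hev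
    have hF : HasDerivAt (fun t : ℝ => fderiv ℝ L (t • v) w)
        (fderiv ℝ (fderiv ℝ L) v v w) 1 := by
      have := hev'.comp_hasDerivAt 1 hin
      exact this
    have hG : HasDerivAt (fun t : ℝ => fderiv ℝ L (t • v) w)
        (fderiv ℝ L v w) 1 := by
      have heq : (fun t : ℝ => t * fderiv ℝ L v w)
          =ᶠ[nhds 1] fun t : ℝ => fderiv ℝ L (t • v) w := by
        filter_upwards [Ioi_mem_nhds (show (0:ℝ) < 1 by norm_num)] with t ht
        exact (hfd_homog t ht w).symm
      exact (hasDerivAt_mul_const (fderiv ℝ L v w)).congr_of_eventuallyEq heq.symm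
    exact hF.unique hG
  -- Euler's identity at v : DL(v)(v) = 2 L(v)
  have hLv : L v = 0 := hL_null v hv hv0
  have hEuler : fderiv ℝ L v v = 0 := by
    have hin : HasDerivAt (fun t : ℝ => t • v) v 1 := by
      simpa using (hasDerivAt_id (1 : ℝ)).smul_const v
    have hLd : HasFDerivAt L (fderiv ℝ L v) ((1 : ℝ) • v) := by
      rw [one_smul]; exact (hdL v hvStar).hasFDerivAt
    have hF : HasDerivAt (fun t : ℝ => L (t • v)) (fderiv ℝ L v v) 1 := by
      exact hLd.comp_hasDerivAt 1 hin
    have hG : HasDerivAt (fun t : ℝ => L (t • v)) (2 * L v) 1 := by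
      have heq : (fun t : ℝ => t ^ 2 * L v)
          =ᶠ[nhds 1] fun t : ℝ => L (t • v) := by
        filter_upwards [Ioi_mem_nhds (show (0:ℝ) < 1 by norm_num)] with t ht
        exact (hL_homog v hvStar t ht).symm
      have hpow : HasDerivAt (fun t : ℝ => t ^ 2 * L v) (2 * L v) 1 := by
        simpa using (hasDerivAt_pow 2 (1 : ℝ)).mul_const (L v)
      exact hpow.congr_of_eventuallyEq heq.symm
    rw [hF.unique hG, hLv]; ring
  have hfund : ∀ w : V, fundamentalTensor L v v w = (1 / 2) * fderiv ℝ L v w := by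
    intro w
    unfold fundamentalTensor
    rw [iteratedFDeriv_two_apply]
    simp only [Matrix.cons_val_zero, Matrix.cons_val_one, Matrix.head_cons]
    rw [hkey w]
  have hmain : ∀ w : V, fderiv ℝ L v w = 2 * fundamentalTensor L v v w := by
    intro w; rw [hfund w]; ring
  refine ⟨hLv, by rw [hfund v, hEuler]; ring, hmain, ?_, ?_⟩
  · intro h0
    apply hv0
    apply hg_nondeg v hv hv0 v
    intro w
    rw [hfund w, h0]
    simp
  · intro w
    rw [hmain w]
    constructor
    · intro h; linarith
    · intro h; rw [h]; ring
end

section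
/- For every lightlike vector v ∈ Â \ A, the fundamental tensor g_v is negative semidefinite on the tangent hyperplane to the lightcone at v: g_v(w,w) ≤ 0 for every w ∈ V with g_v(v,w) = 0. Moreover the restriction of g_v to this hyperplane degenerates only in the direction of v: if g_v(v,w) = 0 and g_v(w,w) = 0, then w is a real scalar multiple of v. In particular g_v has index n−1 (this is Proposition 2.2(iii)). -/
open Set

section FinslerAux
open Filter Topology

section Aux
variable {V : Type} [NormedAddCommGroup V] [NormedSpace ℝ V]

private lemma myclm_apply_contAt {X : Type*} [TopologicalSpace X] {E F : Type*}
    [NormedAddCommGroup E] [NormedSpace ℝ E] [NormedAddCommGroup F] [NormedSpace ℝ F]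
    {f : X → E →L[ℝ] F} {g : X → E} {x : X}
    (hf : ContinuousAt f x) (hg : ContinuousAt g x) :
    ContinuousAt (fun y => f y (g y)) x :=
  ContinuousAt.comp (f := fun y => (f y, g y)) (isBoundedBilinearMap_apply.continuous.continuousAt) (hf.prodMk hg)

private lemma my_tendsto_clm_apply {α : Type*} {l : Filter α} {E F : Type*}
    [NormedAddCommGroup E] [NormedSpace ℝ E] [NormedAddCommGroup F] [NormedSpace ℝ F]
    {f : α → E →L[ℝ] F} {g : α → E} {M : E →L[ℝ] F} {e : E}
    (hf : Filter.Tendsto f l (nhds M)) (hg : Filter.Tendsto g l (nhds e)) :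
    Filter.Tendsto (fun y => f y (g y)) l (nhds (M e)) :=
  (isBoundedBilinearMap_apply.continuous.tendsto (M, e)).comp (hf.prodMk_nhds hg)

private lemma homog_fderiv {L : V → ℝ} {S : Set V} (hS : IsOpen S)
    (hsm : ∀ x ∈ S, ContDiffAt ℝ (⊤ : ℕ∞) L x)
    (hcone : ∀ x ∈ S, ∀ t : ℝ, 0 < t → t • x ∈ S)
    (hhom : ∀ x ∈ S, ∀ t : ℝ, 0 < t → L (t • x) = t ^ 2 * L x)
    {x : V} (hx : x ∈ S) {s : ℝ} (hs : 0 < s) :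
    fderiv ℝ L (s • x) = s • fderiv ℝ L x := by
  have hsx : s • x ∈ S := hcone x hx s hs
  have hdL : ∀ y ∈ S, HasFDerivAt L (fderiv ℝ L y) y := fun y hy =>
    ((hsm y hy).differentiableAt (by simp)).hasFDerivAt
  have hlin : HasFDerivAt (fun y : V => s • y) (s • ContinuousLinearMap.id ℝ V) x := by
    exact (hasFDerivAt_id x).const_smul s
  have h1 : HasFDerivAt (fun y => L (s • y))
      ((fderiv ℝ L (s • x)).comp (s • ContinuousLinearMap.id ℝ V)) x :=
    (hdL _ hsx).comp x hlin
  have h2 : HasFDerivAt (fun y => s ^ 2 * L y) ((s ^ 2) • fderiv ℝ L x) x :=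
    (hdL x hx).const_mul (s ^ 2)
  have heq : (fun y => s ^ 2 * L y) =ᶠ[nhds x] fun y => L (s • y) := by
    filter_upwards [hS.mem_nhds hx] with y hy using (hhom y hy s hs).symm
  have h3 := h1.congr_of_eventuallyEq heq
  have h4 := h3.unique h2
  ext w
  have h5 := congrArg (fun f : V →L[ℝ] ℝ => f w) h4
  simp only [ContinuousLinearMap.coe_comp', Function.comp_apply,
    ContinuousLinearMap.smul_apply, ContinuousLinearMap.coe_id', id_eq, smul_eq_mul] at h5 ⊢
  rw [map_smul, smul_eq_mul] at h5
  exact mul_left_cancel₀ (ne_of_gt hs)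
    (by rw [h5]; ring)

private lemma euler1 {L : V → ℝ} {S : Set V} (hS : IsOpen S)
    (hsm : ∀ x ∈ S, ContDiffAt ℝ (⊤ : ℕ∞) L x)
    (hcone : ∀ x ∈ S, ∀ t : ℝ, 0 < t → t • x ∈ S)
    (hhom : ∀ x ∈ S, ∀ t : ℝ, 0 < t → L (t • x) = t ^ 2 * L x)
    {x : V} (hx : x ∈ S) : fderiv ℝ L x x = 2 * L x := by
  have hdL : HasFDerivAt L (fderiv ℝ L x) x :=
    ((hsm x hx).differentiableAt (by simp)).hasFDerivAt
  have hcurve : HasDerivAt (fun t : ℝ => t • x) x 1 := by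
    simpa using (hasDerivAt_id (1:ℝ)).smul_const x
  have hdL' : HasFDerivAt L (fderiv ℝ L x) ((1:ℝ) • x) := by rw [one_smul]; exact hdL
  have h1 : HasDerivAt (fun t : ℝ => L (t • x)) (fderiv ℝ L x x) 1 := by
    have := hdL'.comp_hasDerivAt 1 ((hasDerivAt_id (1:ℝ)).smul_const x)
    simp only [one_smul] at this; exact this
  have h2 : HasDerivAt (fun t : ℝ => t ^ 2 * L x) (2 * L x) 1 := by
    simpa using (hasDerivAt_pow 2 (1:ℝ)).mul_const (L x)
  have heq : (fun t : ℝ => t ^ 2 * L x) =ᶠ[𝓝 (1:ℝ)] fun t => L (t • x) := by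
    filter_upwards [eventually_gt_nhds zero_lt_one] with t ht using (hhom x hx t ht).symm
  exact (h1.congr_of_eventuallyEq heq).unique h2

private lemma euler2 {L : V → ℝ} {S : Set V} (hS : IsOpen S)
    (hsm : ∀ x ∈ S, ContDiffAt ℝ (⊤ : ℕ∞) L x)
    (hcone : ∀ x ∈ S, ∀ t : ℝ, 0 < t → t • x ∈ S)
    (hhom : ∀ x ∈ S, ∀ t : ℝ, 0 < t → L (t • x) = t ^ 2 * L x)
    {x : V} (hx : x ∈ S) : fderiv ℝ (fderiv ℝ L) x x = fderiv ℝ L x := by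
  have hdd : HasFDerivAt (fderiv ℝ L) (fderiv ℝ (fderiv ℝ L) x) x :=
    (((hsm x hx).fderiv_right (m := 1) (by exact WithTop.coe_le_coe.2 le_top)).differentiableAt one_ne_zero).hasFDerivAt
  have hcurve : HasDerivAt (fun t : ℝ => t • x) x 1 := by
    simpa using (hasDerivAt_id (1:ℝ)).smul_const x
  have hdd' : HasFDerivAt (fderiv ℝ L) (fderiv ℝ (fderiv ℝ L) x) ((1:ℝ) • x) := by
    rw [one_smul]; exact hdd
  have h1 : HasDerivAt (fun t : ℝ => fderiv ℝ L (t • x)) (fderiv ℝ (fderiv ℝ L) x x) 1 := by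
    have := hdd'.comp_hasDerivAt 1 ((hasDerivAt_id (1:ℝ)).smul_const x)
    simp only [one_smul] at this; exact this
  have h2 : HasDerivAt (fun t : ℝ => t • fderiv ℝ L x) (fderiv ℝ L x) 1 := by
    simpa using (hasDerivAt_id (1:ℝ)).smul_const (fderiv ℝ L x)
  have heq : (fun t : ℝ => t • fderiv ℝ L x) =ᶠ[𝓝 (1:ℝ)] fun t => fderiv ℝ L (t • x) := by
    filter_upwards [eventually_gt_nhds zero_lt_one] with t ht using
      (homog_fderiv hS hsm hcone hhom hx ht).symm
  exact (h1.congr_of_eventuallyEq heq).unique h2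

end Aux

section Aux2
variable {V : Type} [NormedAddCommGroup V] [NormedSpace ℝ V]

/-- Second-order lower Taylor bound along a ray, staying in an open set `A`. -/
private lemma taylor_lb {L : V → ℝ} {S : Set V} (hS : IsOpen S)
    (hsm : ∀ x ∈ S, ContDiffAt ℝ (⊤ : ℕ∞) L x)
    {A : Set V} (hA : IsOpen A) (hAS : A ⊆ S)
    {u w : V} (hu : u ∈ A) (hw : fderiv ℝ L u w = 0)
    {q : ℝ} (hq : fderiv ℝ (fderiv ℝ L) u w w = 2 * q) (hqpos : 0 < q) :
    ∃ δ > 0, ∀ t : ℝ, t ∈ Set.Icc 0 δ →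
      u + t • w ∈ A ∧ L u + q / 2 * t ^ 2 ≤ L (u + t • w) := by
  set γ : ℝ → V := fun t => u + t • w with hγdef
  have hγcont : Continuous γ := by fun_prop
  have hγ0 : γ 0 = u := by simp [hγdef]
  have huS : u ∈ S := hAS hu
  -- eventually near 0 : γ t ∈ A and q < D²L (γ t) w w
  have hD2cont : ContinuousAt (fderiv ℝ (fderiv ℝ L)) u :=
    (((hsm u huS).fderiv_right (m := 2) (by exact WithTop.coe_le_coe.2 le_top)).fderiv_right (m := 1) (by norm_num)).continuousAt
  have hFcont : ContinuousAt (fun t => fderiv ℝ (fderiv ℝ L) (γ t) w w) 0 := by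
    have h1 : ContinuousAt (fun t => fderiv ℝ (fderiv ℝ L) (γ t)) 0 := by
      have hD2cont' : ContinuousAt (fderiv ℝ (fderiv ℝ L)) (γ 0) := by rw [hγ0]; exact hD2cont
      exact hD2cont'.comp hγcont.continuousAt
    exact myclm_apply_contAt (myclm_apply_contAt h1 continuousAt_const) continuousAt_const
  have hev : ∀ᶠ t in 𝓝 (0:ℝ), γ t ∈ A ∧ q < fderiv ℝ (fderiv ℝ L) (γ t) w w := by
    have e1 : ∀ᶠ t in 𝓝 (0:ℝ), γ t ∈ A := by
      have : ContinuousAt γ 0 := hγcont.continuousAt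
      exact this.eventually_mem (by rw [hγ0]; exact hA.mem_nhds hu)
    have e2 : ∀ᶠ t in 𝓝 (0:ℝ), q < fderiv ℝ (fderiv ℝ L) (γ t) w w := by
      apply hFcont.eventually_mem (s := Set.Ioi q)
      rw [hγ0, hq]
      exact isOpen_Ioi.mem_nhds (by simpa using by linarith)
    exact e1.and e2
  obtain ⟨ε, hε, hball⟩ := Metric.eventually_nhds_iff.1 hev
  refine ⟨ε / 2, by linarith, fun t ht => ?_⟩
  have hball' : ∀ t : ℝ, t ∈ Set.Icc 0 (ε/2) →
      γ t ∈ A ∧ q < fderiv ℝ (fderiv ℝ L) (γ t) w w := by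
    intro t ht
    apply hball
    rw [Real.dist_eq, sub_zero, abs_of_nonneg ht.1]
    linarith [ht.2]
  have hmemA : γ t ∈ A := (hball' t ht).1
  refine ⟨hmemA, ?_⟩
  -- derivatives along the segment
  have hder1 : ∀ s : ℝ, s ∈ Set.Icc 0 (ε/2) →
      HasDerivAt (fun r => L (γ r)) (fderiv ℝ L (γ s) w) s := by
    intro s hs
    have hmem : γ s ∈ S := hAS (hball' s hs).1
    have hdL : HasFDerivAt L (fderiv ℝ L (γ s)) (γ s) :=
      ((hsm _ hmem).differentiableAt (by simp)).hasFDerivAt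
    have hγd : HasDerivAt γ w s := by
      have := ((hasDerivAt_id s).smul_const w).const_add u
      simp only [one_smul] at this; exact this
    exact hdL.comp_hasDerivAt s hγd
  have hder2 : ∀ s : ℝ, s ∈ Set.Icc 0 (ε/2) →
      HasDerivAt (fun r => fderiv ℝ L (γ r) w) (fderiv ℝ (fderiv ℝ L) (γ s) w w) s := by
    intro s hs
    have hmem : γ s ∈ S := hAS (hball' s hs).1
    have hdd : HasFDerivAt (fderiv ℝ L) (fderiv ℝ (fderiv ℝ L) (γ s)) (γ s) :=
      (((hsm _ hmem).fderiv_right (m := 1) (by exact WithTop.coe_le_coe.2 le_top)).differentiableAt one_ne_zero).hasFDerivAt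
    have hγd : HasDerivAt γ w s := by
      have := ((hasDerivAt_id s).smul_const w).const_add u
      simp only [one_smul] at this; exact this
    have h1 : HasDerivAt (fun r => fderiv ℝ L (γ r)) (fderiv ℝ (fderiv ℝ L) (γ s) w) s :=
      hdd.comp_hasDerivAt s hγd
    simpa using h1.clm_apply (hasDerivAt_const s w)
  -- G r := fderiv L (γ r) w - q * r is nonneg on [0, ε/2]
  set G : ℝ → ℝ := fun r => fderiv ℝ L (γ r) w - q * r with hGdef
  have hG' : ∀ s ∈ Set.Icc 0 (ε/2),
      HasDerivAt G (fderiv ℝ (fderiv ℝ L) (γ s) w w - q) s := by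
    intro s hs
    have h2 : HasDerivAt (fun r : ℝ => q * r) q s := by
      simpa using (hasDerivAt_id s).const_mul q
    exact (hder2 s hs).sub h2
  have hGmono : StrictMonoOn G (Set.Icc 0 (ε/2)) := by
    apply strictMonoOn_of_deriv_pos (convex_Icc 0 (ε/2))
    · intro s hs
      exact ((hG' s hs).differentiableAt).continuousAt.continuousWithinAt
    · intro s hs
      rw [interior_Icc] at hs
      have hs' : s ∈ Set.Icc 0 (ε/2) := ⟨le_of_lt hs.1, le_of_lt hs.2⟩
      rw [(hG' s hs').deriv]
      linarith [(hball' s hs').2]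
  have hG0 : G 0 = 0 := by simp [hGdef, hγ0, hw]
  have hGnonneg : ∀ s ∈ Set.Icc 0 (ε/2), 0 ≤ G s := by
    intro s hs
    rcases eq_or_lt_of_le hs.1 with h | h
    · rw [← h, hG0]
    · have := hGmono (Set.left_mem_Icc.2 (by linarith)) hs h
      rw [hG0] at this
      exact le_of_lt this
  -- F r := L (γ r) - q/2 * r^2 is monotone on [0, ε/2]
  set F : ℝ → ℝ := fun r => L (γ r) - q / 2 * r ^ 2 with hFdef
  have hF' : ∀ s ∈ Set.Icc 0 (ε/2), HasDerivAt F (G s) s := by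
    intro s hs
    have h1 : HasDerivAt (fun r : ℝ => q / 2 * r ^ 2) (q / 2 * (2 * s)) s := by
      simpa using ((hasDerivAt_pow 2 s).const_mul (q/2))
    have := (hder1 s hs).sub h1
    exact this.congr_deriv (by simp only [hGdef]; ring)
  have hFmono : MonotoneOn F (Set.Icc 0 (ε/2)) := by
    apply monotoneOn_of_deriv_nonneg (convex_Icc 0 (ε/2))
    · intro s hs
      exact ((hF' s hs).differentiableAt).continuousAt.continuousWithinAt
    · intro s hs
      rw [interior_Icc] at hs
      exact ((hF' s ⟨le_of_lt hs.1, le_of_lt hs.2⟩).differentiableAt).differentiableWithinAt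
    · intro s hs
      rw [interior_Icc] at hs
      have hs' : s ∈ Set.Icc 0 (ε/2) := ⟨le_of_lt hs.1, le_of_lt hs.2⟩
      rw [(hF' s hs').deriv]
      exact hGnonneg s hs'
  have := hFmono (Set.left_mem_Icc.2 (by linarith [ht.1, ht.2])) ht ht.1
  simp only [hFdef, hγ0] at this
  nlinarith [this]

end Aux2

section Aux3
variable {V : Type} [NormedAddCommGroup V] [NormedSpace ℝ V]

private lemma timelike_semidef {L : V → ℝ} {S : Set V} (hS : IsOpen S)
    (hsm : ∀ x ∈ S, ContDiffAt ℝ (⊤ : ℕ∞) L x)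
    (hhom : ∀ x ∈ S, ∀ t : ℝ, 0 < t → L (t • x) = t ^ 2 * L x)
    {A : Set V} (hA : IsOpen A) (hAS : A ⊆ S)
    (hA_cone : ∀ v ∈ A, ∀ t : ℝ, 0 < t → t • v ∈ A)
    (hL_pos : ∀ v ∈ A, 0 < L v)
    (hL_conv : Convex ℝ {v ∈ A | 1 ≤ L v})
    {u : V} (hu : u ∈ A) {w : V} (hw : fderiv ℝ L u w = 0) :
    fderiv ℝ (fderiv ℝ L) u w w ≤ 0 := by
  by_contra hcon
  push_neg at hcon
  set q : ℝ := fderiv ℝ (fderiv ℝ L) u w w / 2 with hqdef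
  have hqpos : 0 < q := by positivity
  have hq : fderiv ℝ (fderiv ℝ L) u w w = 2 * q := by rw [hqdef]; ring
  have hw' : fderiv ℝ L u (-w) = 0 := by rw [map_neg, hw, neg_zero]
  have hq' : fderiv ℝ (fderiv ℝ L) u (-w) (-w) = 2 * q := by
    simp only [map_neg, ContinuousLinearMap.neg_apply, neg_neg]; exact hq
  obtain ⟨δ₁, hδ₁, H₁⟩ := taylor_lb hS hsm hA hAS hu hw hq hqpos
  obtain ⟨δ₂, hδ₂, H₂⟩ := taylor_lb hS hsm hA hAS hu hw' hq' hqpos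
  set δ : ℝ := min δ₁ δ₂ with hδdef
  have hδ : 0 < δ := lt_min hδ₁ hδ₂
  have h₁ := H₁ δ ⟨le_of_lt hδ, min_le_left _ _⟩
  have h₂ := H₂ δ ⟨le_of_lt hδ, min_le_right _ _⟩
  set ℓ : ℝ := L u with hℓdef
  have hℓ : 0 < ℓ := hL_pos u hu
  set c : ℝ := ℓ + q / 4 * δ ^ 2 with hcdef
  have hc : 0 < c := by rw [hcdef]; positivity
  have hqd : 0 < q * δ ^ 2 := by positivity
  set s : ℝ := Real.sqrt (1 / c) with hsdef
  have hspos : 0 < s := Real.sqrt_pos.2 (by positivity)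
  have hs2 : s ^ 2 = 1 / c := Real.sq_sqrt (by positivity)
  -- the two points
  have hx₁A : s • (u + δ • w) ∈ A := hA_cone _ h₁.1 s hspos
  have hx₂A : s • (u + δ • (-w)) ∈ A := hA_cone _ h₂.1 s hspos
  have hLx₁ : 1 ≤ L (s • (u + δ • w)) := by
    have hX : c ≤ L (u + δ • w) := by rw [hcdef]; linarith [h₁.2]
    rw [hhom _ (hAS h₁.1) s hspos, hs2, one_div]
    have h3 := mul_le_mul_of_nonneg_left hX (le_of_lt (inv_pos.2 hc))
    rwa [inv_mul_cancel₀ (ne_of_gt hc)] at h3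
  have hLx₂ : 1 ≤ L (s • (u + δ • (-w))) := by
    have hX : c ≤ L (u + δ • (-w)) := by rw [hcdef]; linarith [h₂.2]
    rw [hhom _ (hAS h₂.1) s hspos, hs2, one_div]
    have h3 := mul_le_mul_of_nonneg_left hX (le_of_lt (inv_pos.2 hc))
    rwa [inv_mul_cancel₀ (ne_of_gt hc)] at h3
  have hmid : (1/2 : ℝ) • (s • (u + δ • w)) + (1/2 : ℝ) • (s • (u + δ • (-w))) = s • u := by
    module
  have hmem : s • u ∈ {v ∈ A | 1 ≤ L v} := by
    rw [← hmid]
    exact hL_conv ⟨hx₁A, hLx₁⟩ ⟨hx₂A, hLx₂⟩ (by norm_num) (by norm_num) (by norm_num)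
  have hLsu : L (s • u) = s ^ 2 * ℓ := hhom u (hAS hu) s hspos
  have hfin : (1 : ℝ) ≤ s ^ 2 * ℓ := by rw [← hLsu]; exact hmem.2
  rw [hs2, one_div] at hfin
  have h3 := mul_le_mul_of_nonneg_left hfin (le_of_lt hc)
  rw [mul_one, ← mul_assoc, mul_inv_cancel₀ (ne_of_gt hc), one_mul] at h3
  rw [hcdef] at h3
  linarith

end Aux3

section Aux4
variable {V : Type} [NormedAddCommGroup V] [NormedSpace ℝ V]

private lemma lightlike_main {L : V → ℝ}
    (A : Set V) (hA_open : IsOpen A) (hA_ne : A.Nonempty) (hA0 : (0 : V) ∉ A) (hA_conv : Convex ℝ A)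
    (hA_cone : ∀ v ∈ A, ∀ t : ℝ, 0 < t → t • v ∈ A)
    (Astar : Set V) (hAstar_open : IsOpen Astar)
    (hAstar_cone : ∀ v ∈ Astar, ∀ t : ℝ, 0 < t → t • v ∈ Astar)
    (hAhat_sub : closure A \ {0} ⊆ Astar)
    (hL_smooth : ∀ v ∈ Astar, ContDiffAt ℝ (⊤ : ℕ∞) L v)
    (hL_homog : ∀ v ∈ Astar, ∀ t : ℝ, 0 < t → L (t • v) = t ^ 2 * L v)
    (hL_pos : ∀ v ∈ A, 0 < L v)
    (hL_conv : Convex ℝ {v ∈ A | 1 ≤ L v})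
    (v : V) (hv : v ∈ closure A \ A) (hv0 : v ≠ 0) (hLv : L v = 0)
    (hnd : ∀ u : V, (∀ x : V, fderiv ℝ (fderiv ℝ L) v u x = 0) → u = 0) :
    (∀ x ∈ A, 0 < fderiv ℝ L v x) ∧
    (∀ w : V, fderiv ℝ L v w = 0 → fderiv ℝ (fderiv ℝ L) v w w ≤ 0) := by
  have hAsub : A ⊆ Astar := fun x hx =>
    hAhat_sub ⟨subset_closure hx, by simp; rintro rfl; exact hA0 hx⟩
  have hvS : v ∈ Astar := hAhat_sub ⟨hv.1, by simp [hv0]⟩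
  -- A is closed under addition, and closure A + A ⊆ A
  have hAadd : ∀ x ∈ A, ∀ y ∈ A, x + y ∈ A := by
    intro x hx y hy
    have h1 : (1/2 : ℝ) • x + (1/2 : ℝ) • y ∈ A :=
      hA_conv hx hy (by norm_num) (by norm_num) (by norm_num)
    have h2 := hA_cone _ h1 2 (by norm_num)
    have : (2:ℝ) • ((1/2 : ℝ) • x + (1/2 : ℝ) • y) = x + y := by module
    rwa [this] at h2
  have hclA_add : ∀ a ∈ closure A, ∀ x ∈ A, a + x ∈ A := by
    intro a ha x hx
    obtain ⟨ε, hε, hball⟩ := Metric.isOpen_iff.1 hA_open x hx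
    obtain ⟨a', ha', hd⟩ := Metric.mem_closure_iff.1 ha ε hε
    have hx' : x + (a - a') ∈ A := by
      apply hball
      rw [Metric.mem_ball, dist_eq_norm]
      simpa [dist_eq_norm] using hd
    have := hAadd a' ha' _ hx'
    have heq : a' + (x + (a - a')) = a + x := by abel
    rwa [heq] at this
  -- first derivative is nonneg on A-directions
  have hnonneg : ∀ x ∈ A, 0 ≤ fderiv ℝ L v x := by
    intro x hx
    have hdL : HasFDerivAt L (fderiv ℝ L v) v :=
      ((hL_smooth v hvS).differentiableAt (by simp)).hasFDerivAt
    have hγd : HasDerivAt (fun t : ℝ => v + t • x) x 0 := by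
      simpa using ((hasDerivAt_id (0:ℝ)).smul_const x).const_add v
    have hdL' : HasFDerivAt L (fderiv ℝ L v) (v + (0:ℝ) • x) := by simpa using hdL
    have hD : HasDerivAt (fun t : ℝ => L (v + t • x)) (fderiv ℝ L v x) 0 := by
      exact hdL'.comp_hasDerivAt 0 hγd
    rw [hasDerivAt_iff_tendsto_slope] at hD
    have hD2 : Filter.Tendsto (slope (fun t : ℝ => L (v + t • x)) 0) (nhdsWithin 0 (Set.Ioi 0))
        (nhds (fderiv ℝ L v x)) :=
      hD.mono_left (nhdsWithin_mono _ (fun t ht => ne_of_gt ht))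
    apply ge_of_tendsto hD2
    filter_upwards [self_mem_nhdsWithin] with t (ht : 0 < t)
    have hmem : v + t • x ∈ A := hclA_add v hv.1 _ (hA_cone x hx t ht)
    have hpos := hL_pos _ hmem
    rw [slope_def_field]
    simp only [zero_smul, add_zero, hLv, sub_zero]
    exact div_nonneg (le_of_lt hpos) (le_of_lt ht)
  -- strict positivity on A-directions
  have hpos1 : ∀ x ∈ A, 0 < fderiv ℝ L v x := by
    intro x hx
    rcases lt_or_eq_of_le (hnonneg x hx) with h | h
    · exact h
    exfalso
    have hzero : ∀ u : V, fderiv ℝ L v u = 0 := by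
      intro u
      obtain ⟨ε, hε, hball⟩ := Metric.isOpen_iff.1 hA_open x hx
      have hcc : 0 < ε / (2 * (‖u‖ + 1)) := by positivity
      have hmem : ∀ s : ℝ, |s| ≤ ε / (2 * (‖u‖ + 1)) → x + s • u ∈ A := by
        intro s hs
        apply hball
        rw [Metric.mem_ball, dist_eq_norm]
        have h1 : x + s • u - x = s • u := by abel
        rw [h1, norm_smul, Real.norm_eq_abs]
        have h2 : ‖u‖ < ‖u‖ + 1 := by linarith
        have h3 : |s| * ‖u‖ ≤ ε / (2 * (‖u‖ + 1)) * (‖u‖ + 1) := by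
          apply mul_le_mul hs (le_of_lt h2) (norm_nonneg u) (le_of_lt hcc)
        have h4 : ε / (2 * (‖u‖ + 1)) * (‖u‖ + 1) = ε / 2 := by field_simp
        rw [h4] at h3
        linarith
      set s₀ : ℝ := ε / (2 * (‖u‖ + 1)) with hs₀
      have e1 := hnonneg _ (hmem s₀ (by rw [abs_of_pos hcc]))
      have e2 := hnonneg _ (hmem (-s₀) (by rw [abs_neg, abs_of_pos hcc]))
      rw [map_add, map_smul, smul_eq_mul, ← h] at e1
      rw [map_add, map_smul, smul_eq_mul, ← h] at e2
      rw [neg_mul] at e2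
      have h5 : s₀ * fderiv ℝ L v u = 0 := le_antisymm (by linarith) (by linarith)
      exact ((mul_eq_zero.1 h5).resolve_left (ne_of_gt hcc))
    have hvz : v = 0 := by
      apply hnd
      intro x'
      have he2 : fderiv ℝ (fderiv ℝ L) v v = fderiv ℝ L v :=
        euler2 hAstar_open hL_smooth hAstar_cone hL_homog hvS
      rw [he2]
      exact hzero x'
    exact hv0 hvz
  refine ⟨hpos1, ?_⟩
  -- main limit argument
  intro w hw
  obtain ⟨z, hz⟩ := hA_ne
  have hβ : 0 < fderiv ℝ L v z := hpos1 z hz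
  -- continuity of first and second derivatives at v
  have hD1cont : ContinuousAt (fderiv ℝ L) v :=
    ((hL_smooth v hvS).fderiv_right (m := 2) (by exact WithTop.coe_le_coe.2 le_top)).continuousAt
  have hD2cont : ContinuousAt (fderiv ℝ (fderiv ℝ L)) v :=
    (((hL_smooth v hvS).fderiv_right (m := 2) (by exact WithTop.coe_le_coe.2 le_top)).fderiv_right (m := 1)
      (by norm_num)).continuousAt
  have hγc : Continuous (fun t : ℝ => v + t • z) := by fun_prop
  have t1 : Filter.Tendsto (fun t : ℝ => v + t • z) (nhds 0) (nhds v) :=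
    hγc.tendsto' 0 v (by simp)
  have t2 : Filter.Tendsto (fun t : ℝ => fderiv ℝ L (v + t • z)) (nhds 0)
      (nhds (fderiv ℝ L v)) := hD1cont.tendsto.comp t1
  have t3 : Filter.Tendsto (fun t : ℝ => fderiv ℝ (fderiv ℝ L) (v + t • z)) (nhds 0)
      (nhds (fderiv ℝ (fderiv ℝ L) v)) := hD2cont.tendsto.comp t1
  have tnum : Filter.Tendsto (fun t : ℝ => fderiv ℝ L (v + t • z) w) (nhds 0)
      (nhds (fderiv ℝ L v w)) := my_tendsto_clm_apply t2 tendsto_const_nhds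
  have tden : Filter.Tendsto (fun t : ℝ => fderiv ℝ L (v + t • z) z) (nhds 0)
      (nhds (fderiv ℝ L v z)) := my_tendsto_clm_apply t2 tendsto_const_nhds
  have tc : Filter.Tendsto
      (fun t : ℝ => fderiv ℝ L (v + t • z) w / fderiv ℝ L (v + t • z) z) (nhds 0)
      (nhds 0) := by
    have := tnum.div tden (ne_of_gt hβ)
    rwa [hw, zero_div] at this
  have twt : Filter.Tendsto
      (fun t : ℝ => w - (fderiv ℝ L (v + t • z) w / fderiv ℝ L (v + t • z) z) • z)
      (nhds 0) (nhds w) := by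
    have h1 : Filter.Tendsto
        (fun t : ℝ => (fderiv ℝ L (v + t • z) w / fderiv ℝ L (v + t • z) z) • z)
        (nhds 0) (nhds ((0:ℝ) • z)) := tc.smul tendsto_const_nhds
    have h2 := (tendsto_const_nhds :
      Filter.Tendsto (fun _ : ℝ => w) (nhds 0) (nhds w)).sub h1
    rwa [zero_smul, sub_zero] at h2
  have tF : Filter.Tendsto (fun t : ℝ => fderiv ℝ (fderiv ℝ L) (v + t • z)
      (w - (fderiv ℝ L (v + t • z) w / fderiv ℝ L (v + t • z) z) • z)
      (w - (fderiv ℝ L (v + t • z) w / fderiv ℝ L (v + t • z) z) • z))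
      (nhds 0) (nhds (fderiv ℝ (fderiv ℝ L) v w w)) :=
    my_tendsto_clm_apply (my_tendsto_clm_apply t3 twt) twt
  have tF' := tF.mono_left (nhdsWithin_le_nhds (s := Set.Ioi (0:ℝ)))
  apply le_of_tendsto tF' 
  have hdenpos : ∀ᶠ t : ℝ in nhds 0, 0 < fderiv ℝ L (v + t • z) z :=
    tden.eventually_mem (isOpen_Ioi.mem_nhds hβ)
  filter_upwards [hdenpos.filter_mono nhdsWithin_le_nhds, self_mem_nhdsWithin]
    with t hdt (ht : 0 < t)
  have hmemA : v + t • z ∈ A := hclA_add v hv.1 _ (hA_cone z hz t ht)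
  have hD1wt : fderiv ℝ L (v + t • z)
      (w - (fderiv ℝ L (v + t • z) w / fderiv ℝ L (v + t • z) z) • z) = 0 := by
    rw [map_sub, map_smul, smul_eq_mul, div_mul_cancel₀ _ (ne_of_gt hdt), sub_self]
  exact timelike_semidef hAstar_open hL_smooth hL_homog hA_open hAsub hA_cone
    hL_pos hL_conv hmemA hD1wt
end Aux4

private lemma quad_nonpos {a c : ℝ} (ha : a ≤ 0) (h : ∀ t : ℝ, 2 * (t * c) + t ^ 2 * a ≤ 0) :
    c = 0 := by
  have hc2 : c ^ 2 ≤ 0 := by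
    rcases eq_or_lt_of_le ha with h0 | hlt
    · have h1 := h c
      rw [← h0] at h1
      nlinarith
    · have hna : 0 < -a := by linarith
      have h1 := h (c / (-a))
      have hane : a ≠ 0 := ne_of_lt hlt
      have heq : 2 * ((c / (-a)) * c) + (c / (-a)) ^ 2 * a = c ^ 2 / (-a) := by
        field_simp
        ring
      rw [heq] at h1
      by_contra hcon
      push_neg at hcon
      have := div_pos hcon hna
      linarith
  have : c ^ 2 = 0 := le_antisymm hc2 (sq_nonneg c)
  exact (pow_eq_zero_iff (by norm_num : (2:ℕ) ≠ 0)).1 this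

private lemma ft_eq {V : Type} [NormedAddCommGroup V] [NormedSpace ℝ V]
    (L : V → ℝ) (v a c : V) :
    fundamentalTensor L v a c = 1 / 2 * fderiv ℝ (fderiv ℝ L) v a c := by
  rw [fundamentalTensor, iteratedFDeriv_two_apply]
  simp

end FinslerAux

set_option maxHeartbeats 1000000 in
/-- Proposition 2.2(iii): for a lightlike vector `v`, the fundamental tensor `g_v` is
negative semidefinite on the tangent hyperplane `{w | g_v(v,w) = 0}` to the lightcone,
degenerates there only in the direction of `v`, and has index `n - 1`. -/
theorem finsler_fundamental_tensor_lightlike_semidefinite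
    {V : Type} [NormedAddCommGroup V] [NormedSpace ℝ V] [FiniteDimensional ℝ V]
    {n : ℕ} (hn : 2 ≤ n) (hdim : Module.finrank ℝ V = n)
    (A : Set V) (hA_open : IsOpen A) (hA_ne : A.Nonempty)
    (hA0 : (0 : V) ∉ A) (hA_conv : Convex ℝ A)
    (hA_cone : ∀ v ∈ A, ∀ t : ℝ, 0 < t → t • v ∈ A)
    (hA_salient : ∀ v : V, v ∈ closure A → -v ∈ closure A → v = 0)
    (Astar : Set V) (hAstar_open : IsOpen Astar) (hAstar0 : (0 : V) ∉ Astar)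
    (hAstar_cone : ∀ v ∈ Astar, ∀ t : ℝ, 0 < t → t • v ∈ Astar)
    (hAhat_sub : closure A \ {0} ⊆ Astar)
    (L : V → ℝ)
    (hL_smooth : ∀ v ∈ Astar, ContDiffAt ℝ (⊤ : ℕ∞) L v)
    (hL_homog : ∀ v ∈ Astar, ∀ t : ℝ, 0 < t → L (t • v) = t ^ 2 * L v)
    (hL_pos : ∀ v ∈ A, 0 < L v)
    (hL_null : ∀ v ∈ closure A \ A, v ≠ 0 → L v = 0)
    (hL_conv : Convex ℝ {v ∈ A | 1 ≤ L v})
    (hg_nondeg : ∀ v ∈ closure A \ A, v ≠ 0 →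
      ∀ u : V, (∀ w : V, fundamentalTensor L v u w = 0) → u = 0)
    (v : V) (hv : v ∈ closure A \ A) (hv0 : v ≠ 0) :
    (∀ w : V, fundamentalTensor L v v w = 0 → fundamentalTensor L v w w ≤ 0) ∧
    (∀ w : V, fundamentalTensor L v v w = 0 → fundamentalTensor L v w w = 0 →
      ∃ t : ℝ, w = t • v) ∧
    (∃ W : Submodule ℝ V, Module.finrank ℝ W = n - 1 ∧
      ∀ w ∈ W, w ≠ 0 → fundamentalTensor L v w w < 0) ∧
    (∀ W : Submodule ℝ V, (∀ w ∈ W, w ≠ 0 → fundamentalTensor L v w w < 0) →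
      Module.finrank ℝ W ≤ n - 1) := by
  have hvS : v ∈ Astar := hAhat_sub ⟨hv.1, by simp [hv0]⟩
  have hLv : L v = 0 := hL_null v hv hv0
  have hnd : ∀ u : V, (∀ x : V, fderiv ℝ (fderiv ℝ L) v u x = 0) → u = 0 := by
    intro u hu
    exact hg_nondeg v hv hv0 u (fun x => by rw [ft_eq, hu x]; ring)
  obtain ⟨hpos1, hsemi⟩ := lightlike_main A hA_open hA_ne hA0 hA_conv hA_cone Astar
    hAstar_open hAstar_cone hAhat_sub hL_smooth hL_homog hL_pos hL_conv v hv hv0 hLv hnd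
  have he2 : fderiv ℝ (fderiv ℝ L) v v = fderiv ℝ L v :=
    euler2 hAstar_open hL_smooth hAstar_cone hL_homog hvS
  have he1 : fderiv ℝ L v v = 2 * L v :=
    euler1 hAstar_open hL_smooth hAstar_cone hL_homog hvS
  have hbvv : fderiv ℝ (fderiv ℝ L) v v v = 0 := by
    rw [he2, he1, hLv]; ring
  have hsymm : ∀ a c : V, fderiv ℝ (fderiv ℝ L) v a c = fderiv ℝ (fderiv ℝ L) v c a :=
    (hL_smooth v hvS).isSymmSndFDerivAt (by rw [minSmoothness_of_isRCLikeNormedField]; exact WithTop.coe_le_coe.2 le_top)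
  obtain ⟨z, hz⟩ := hA_ne
  have hβ : 0 < fderiv ℝ L v z := hpos1 z hz
  -- key2 : degenerate directions on the hyperplane are multiples of v
  have key2 : ∀ w : V, fderiv ℝ L v w = 0 → fderiv ℝ (fderiv ℝ L) v w w = 0 →
      ∃ t : ℝ, w = t • v := by
    intro w hD1w hbww
    have horth : ∀ x : V, fderiv ℝ L v x = 0 → fderiv ℝ (fderiv ℝ L) v w x = 0 := by
      intro x hx
      have ha : fderiv ℝ (fderiv ℝ L) v x x ≤ 0 := hsemi x hx
      apply quad_nonpos ha
      intro t
      have hsum : fderiv ℝ (fderiv ℝ L) v (w + t • x) (w + t • x) ≤ 0 := by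
        apply hsemi
        simp only [map_add, map_smul, hD1w, hx, smul_zero, add_zero]
      have hexp : fderiv ℝ (fderiv ℝ L) v (w + t • x) (w + t • x)
          = 2 * (t * fderiv ℝ (fderiv ℝ L) v w x) + t ^ 2 * fderiv ℝ (fderiv ℝ L) v x x := by
        simp only [map_add, map_smul, ContinuousLinearMap.add_apply,
          ContinuousLinearMap.smul_apply, smul_eq_mul, hbww]
        rw [hsymm x w]
        ring
      rw [hexp] at hsum
      exact hsum
    -- b w · is proportional to b v ·
    obtain ⟨lam, hlam⟩ : ∃ lam : ℝ,
      lam = fderiv ℝ (fderiv ℝ L) v w z / fderiv ℝ L v z := ⟨_, rfl⟩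
    refine ⟨lam, ?_⟩
    have hwl : w - lam • v = 0 := by
      apply hnd
      intro x
      have hx' : fderiv ℝ L v (x - (fderiv ℝ L v x / fderiv ℝ L v z) • z) = 0 := by
        rw [map_sub, map_smul, smul_eq_mul, div_mul_cancel₀ _ (ne_of_gt hβ), sub_self]
      have h1 := horth _ hx'
      simp only [map_sub, map_smul, smul_eq_mul] at h1
      have h2 : fderiv ℝ (fderiv ℝ L) v w x
          = (fderiv ℝ L v x / fderiv ℝ L v z) * fderiv ℝ (fderiv ℝ L) v w z := by
        have := sub_eq_zero.1 h1
        simpa [smul_eq_mul] using this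
      simp only [map_sub, map_smul, ContinuousLinearMap.sub_apply,
        ContinuousLinearMap.smul_apply, smul_eq_mul, h2, he2, hlam]
      have := sub_eq_zero.2 (h2.symm)
      field_simp
      ring
    exact sub_eq_zero.1 hwl
  -- translation between fundamentalTensor and second derivative
  have hftv : ∀ w : V, fundamentalTensor L v v w = 0 ↔ fderiv ℝ L v w = 0 := by
    intro w
    rw [ft_eq, he2]
    constructor
    · intro h; linarith
    · intro h; rw [h]; ring
  refine ⟨?_, ?_, ?_, ?_⟩
  · -- Part 1
    intro w hw
    rw [ft_eq]
    have := hsemi w ((hftv w).1 hw)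
    linarith
  · -- Part 2
    intro w hw hww
    apply key2 w ((hftv w).1 hw)
    rw [ft_eq] at hww
    linarith
  · -- Part 3 : construction of a negative definite hyperplane
    obtain ⟨c, hc⟩ : ∃ c : ℝ, c = fderiv ℝ (fderiv ℝ L) v z z / (2 * fderiv ℝ L v z) :=
      ⟨_, rfl⟩
    obtain ⟨y', hy'⟩ : ∃ y' : V, y' = z - c • v := ⟨_, rfl⟩
    have hbvy' : fderiv ℝ (fderiv ℝ L) v v y' = fderiv ℝ L v z := by
      rw [he2, hy']
      simp only [map_sub, map_smul, smul_eq_mul, he1, hLv]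
      ring
    have hby'v : fderiv ℝ (fderiv ℝ L) v y' v = fderiv ℝ L v z := by
      rw [hsymm]; exact hbvy'
    have hbzv : fderiv ℝ (fderiv ℝ L) v z v = fderiv ℝ L v z := by
      rw [hsymm z v, he2]
    have hby'y' : fderiv ℝ (fderiv ℝ L) v y' y' = 0 := by
      rw [hy']
      simp only [map_sub, map_smul, ContinuousLinearMap.sub_apply,
        ContinuousLinearMap.smul_apply, smul_eq_mul, hbvv, hbzv]
      rw [show fderiv ℝ (fderiv ℝ L) v v z = fderiv ℝ L v z from by rw [he2]]
      rw [hc]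
      field_simp
      ring
    have hfy' : fderiv ℝ (fderiv ℝ L) v (v + y') y' = fderiv ℝ L v z := by
      rw [map_add, ContinuousLinearMap.add_apply, hbvy', hby'y', add_zero]
    have hfv : fderiv ℝ (fderiv ℝ L) v (v + y') v = fderiv ℝ L v z := by
      rw [map_add, ContinuousLinearMap.add_apply, hbvv, hby'v, zero_add]
    have hsurj : Function.Surjective
        (fderiv ℝ (fderiv ℝ L) v (v + y')).toLinearMap := by
      intro r
      refine ⟨(r / fderiv ℝ L v z) • y', ?_⟩
      show fderiv ℝ (fderiv ℝ L) v (v + y') ((r / fderiv ℝ L v z) • y') = r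
      rw [map_smul, smul_eq_mul, hfy', div_mul_cancel₀ _ (ne_of_gt hβ)]
    refine ⟨LinearMap.ker (fderiv ℝ (fderiv ℝ L) v (v + y')).toLinearMap, ?_, ?_⟩
    · have hrk := LinearMap.finrank_range_add_finrank_ker
        (fderiv ℝ (fderiv ℝ L) v (v + y')).toLinearMap
      rw [LinearMap.range_eq_top.2 hsurj, finrank_top, Module.finrank_self, hdim] at hrk
      omega
    · intro x hxW hx0
      have hxker : fderiv ℝ (fderiv ℝ L) v (v + y') x = 0 := hxW
      rw [ft_eq]
      have hbvx : fderiv ℝ (fderiv ℝ L) v v x = fderiv ℝ L v x := by rw [he2]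
      obtain ⟨t, ht⟩ : ∃ t : ℝ, t = fderiv ℝ L v x / fderiv ℝ L v z := ⟨_, rfl⟩
      obtain ⟨h, hh⟩ : ∃ h : V, h = x - t • y' := ⟨_, rfl⟩
      have hvy'2 : fderiv ℝ L v y' = fderiv ℝ L v z := by
        have h' := hbvy'
        rw [he2] at h'
        exact h'
      have hvh : fderiv ℝ L v h = 0 := by
        rw [hh]
        simp only [map_sub, map_smul, smul_eq_mul, hvy'2]
        rw [ht, div_mul_cancel₀ _ (ne_of_gt hβ), sub_self]
      have hbhh : fderiv ℝ (fderiv ℝ L) v h h ≤ 0 := hsemi h hvh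
      have hvxt : fderiv ℝ L v x = t * fderiv ℝ L v z := by
        rw [ht, div_mul_cancel₀ _ (ne_of_gt hβ)]
      have hby'x : fderiv ℝ (fderiv ℝ L) v y' x = -(t * fderiv ℝ L v z) := by
        rw [map_add, ContinuousLinearMap.add_apply, hbvx] at hxker
        linarith [hxker, hvxt]
      have hxeq : x = h + t • y' := by rw [hh]; abel
      have hby'h : fderiv ℝ (fderiv ℝ L) v y' h = -(t * fderiv ℝ L v z) := by
        rw [hh]
        simp only [map_sub, map_smul, smul_eq_mul, hby'x, hby'y']
        ring
      have hbhy' : fderiv ℝ (fderiv ℝ L) v h y' = -(t * fderiv ℝ L v z) := by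
        rw [hsymm]; exact hby'h
      have hbxx : fderiv ℝ (fderiv ℝ L) v x x
          = fderiv ℝ (fderiv ℝ L) v h h - 2 * t ^ 2 * fderiv ℝ L v z := by
        conv_lhs => rw [hxeq]
        simp only [map_add, map_smul, ContinuousLinearMap.add_apply,
          ContinuousLinearMap.smul_apply, smul_eq_mul, hby'y', hbhy', hby'h]
        ring
      have hle : fderiv ℝ (fderiv ℝ L) v x x ≤ 0 := by
        rw [hbxx]
        nlinarith [sq_nonneg t]
      rcases lt_or_eq_of_le hle with hlt | heq0
      · linarith
      · exfalso
        have h1 : 0 ≤ 2 * t ^ 2 * fderiv ℝ L v z := by positivity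
        have hbhh0 : fderiv ℝ (fderiv ℝ L) v h h = 0 := by
          rw [hbxx] at heq0
          nlinarith
        have ht0 : t = 0 := by
          rw [hbxx, hbhh0] at heq0
          have h2 : t ^ 2 * fderiv ℝ L v z = 0 := by linarith
          rcases mul_eq_zero.1 h2 with h' | h'
          · exact (pow_eq_zero_iff (by norm_num : (2:ℕ) ≠ 0)).1 h'
          · exact absurd h' (ne_of_gt hβ)
        have hxh : x = h := by rw [hh, ht0, zero_smul, sub_zero]
        have hbxx0 : fderiv ℝ (fderiv ℝ L) v x x = 0 := by rw [hxh]; exact hbhh0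
        have hvx : fderiv ℝ L v x = 0 := by rw [hvxt, ht0, zero_mul]
        obtain ⟨s, hs⟩ := key2 x hvx hbxx0
        rw [hs] at hxker
        rw [map_smul, smul_eq_mul, hfv] at hxker
        rcases mul_eq_zero.1 hxker with h' | h'
        · rw [hs, h', zero_smul] at hx0
          exact hx0 rfl
        · exact (ne_of_gt hβ) h'
  · -- Part 4
    intro W hW
    have hvW : v ∉ W := by
      intro hmem
      have := hW v hmem hv0
      rw [ft_eq, hbvv] at this
      norm_num at this
    have hdisj : W ⊓ Submodule.span ℝ {v} = ⊥ := by
      rw [eq_bot_iff]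
      rintro x ⟨hxW, hxs⟩
      obtain ⟨t, rfl⟩ := Submodule.mem_span_singleton.1 hxs
      rw [Submodule.mem_bot]
      by_contra hx0
      have hlt := hW _ hxW hx0
      rw [ft_eq] at hlt
      simp only [map_smul, ContinuousLinearMap.smul_apply, smul_eq_mul, hbvv,
        mul_zero] at hlt
      linarith
    have hsum := Submodule.finrank_sup_add_finrank_inf_eq W (Submodule.span ℝ {v})
    rw [hdisj, finrank_bot, finrank_span_singleton hv0] at hsum
    have hle := Submodule.finrank_le (W ⊔ Submodule.span ℝ {v})
    rw [hdim] at hle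
    omega
end

section
/- For every lightlike vector v ∈ Â \ A, the closed cone Ā lies on one side of the tangent hyperplane to the lightcone at v, i.e. g_v(v,w) ≥ 0 for every w ∈ Ā (convexity of the lightcone); and the intersection of Ā with this tangent hyperplane is exactly the ray through v: {w ∈ Ā : g_v(v,w) = 0} = {t·v : t ≥ 0} (this is Proposition 2.2(v)). -/
open Set

open Filter Topology Real

section Helpers


section OneD

/-- If `f` has derivative `c` at `0` and its slopes from the right are eventually `≥ b`,
then `b ≤ c`. -/
lemma le_deriv_of_slope {f : ℝ → ℝ} {c b : ℝ} (hf : HasDerivAt f c 0)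
    (h : ∀ᶠ t in 𝓝[>] (0:ℝ), b ≤ (f t - f 0) / t) : b ≤ c := by
  have h1 : Filter.Tendsto (slope f 0) (𝓝[>] (0:ℝ)) (𝓝 c) :=
    (hasDerivAt_iff_tendsto_slope.1 hf).mono_left
      (nhdsWithin_mono 0 (fun x hx => ne_of_gt hx))
  refine ge_of_tendsto h1 ?_
  filter_upwards [h] with t ht
  simpa [slope_def_field, div_eq_iff] using ht

lemma deriv_le_of_slope {f : ℝ → ℝ} {c b : ℝ} (hf : HasDerivAt f c 0)
    (h : ∀ᶠ t in 𝓝[>] (0:ℝ), (f t - f 0) / t ≤ b) : c ≤ b := by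
  have h1 : Filter.Tendsto (slope f 0) (𝓝[>] (0:ℝ)) (𝓝 c) :=
    (hasDerivAt_iff_tendsto_slope.1 hf).mono_left
      (nhdsWithin_mono 0 (fun x hx => ne_of_gt hx))
  refine le_of_tendsto h1 ?_
  filter_upwards [h] with t ht
  simpa [slope_def_field, div_eq_iff] using ht

lemma deriv_nonneg_of_nonneg {f : ℝ → ℝ} {c : ℝ} (hf : HasDerivAt f c 0)
    (h0 : f 0 = 0) (h : ∀ᶠ t in 𝓝[>] (0:ℝ), 0 ≤ f t) : 0 ≤ c := by
  refine le_deriv_of_slope hf ?_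
  filter_upwards [h, self_mem_nhdsWithin] with t ht ht'
  rw [h0, sub_zero]
  exact div_nonneg ht (le_of_lt ht')

lemma deriv_eq_zero_of_eventually_zero {f : ℝ → ℝ} {c : ℝ} (hf : HasDerivAt f c 0)
    (h0 : f 0 = 0) (h : ∀ᶠ t in 𝓝[>] (0:ℝ), f t = 0) : c = 0 := by
  have h1 : (0:ℝ) ≤ c := deriv_nonneg_of_nonneg hf h0 (by filter_upwards [h] with t ht; simp [ht])
  have h2 : c ≤ 0 := deriv_le_of_slope hf (by filter_upwards [h] with t ht; simp [ht, h0])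
  linarith

/-- Second-order test: if `q ≥ 0` near `0`, `q 0 = 0`, `q` is differentiable near `0` and
`deriv q` has derivative `c` at `0`, then `0 ≤ c`. -/
lemma second_deriv_nonneg_of_nonneg {q : ℝ → ℝ} {c : ℝ}
    (hq : ∀ᶠ t in 𝓝 (0:ℝ), 0 ≤ q t) (h0 : q 0 = 0)
    (hd : ∀ᶠ t in 𝓝 (0:ℝ), DifferentiableAt ℝ q t)
    (hd2 : HasDerivAt (deriv q) c 0) : 0 ≤ c := by
  by_contra hc
  push_neg at hc
  have hmin : IsLocalMin q 0 := by
    filter_upwards [hq] with t ht; simpa [h0] using ht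
  have hq0 : deriv q 0 = 0 := hmin.deriv_eq_zero
  -- slopes of deriv q tend to c
  have h1 : Filter.Tendsto (fun t => deriv q t / t) (𝓝[>] (0:ℝ)) (𝓝 c) := by
    have := (hasDerivAt_iff_tendsto_slope.1 hd2).mono_left
      (nhdsWithin_mono 0 (fun x hx => ne_of_gt hx))
    refine this.congr' ?_
    filter_upwards [self_mem_nhdsWithin] with t ht
    simp [slope_def_field, hq0]
  have h2 : ∀ᶠ t in 𝓝[>] (0:ℝ), deriv q t / t < c / 2 :=
    h1.eventually_lt_const (by linarith)
  -- find a small interval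
  obtain ⟨ε, hε, hball⟩ := Metric.eventually_nhds_iff.1 (hq.and hd)
  obtain ⟨δ, hδ, hIoo⟩ := mem_nhdsGT_iff_exists_Ioo_subset.1 h2
  set b := min (ε / 2) (δ / 2) with hb
  have hδ' : 0 < δ := hδ
  have hbpos : 0 < b := lt_min (by linarith) (by linarith)
  have hbmem : ∀ t ∈ Icc (0:ℝ) b, 0 ≤ q t ∧ DifferentiableAt ℝ q t := by
    intro t ht
    apply hball
    have h1 := ht.1; have h2 := ht.2
    have : |t| < ε := by
      rw [abs_of_nonneg h1]
      have : b ≤ ε / 2 := min_le_left _ _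
      linarith
    simpa [Real.dist_eq] using this
  have hcont : ContinuousOn q (Icc (0:ℝ) b) := fun t ht =>
    ((hbmem t ht).2.continuousAt).continuousWithinAt
  have hderivneg : ∀ t ∈ interior (Icc (0:ℝ) b), deriv q t < 0 := by
    intro t ht
    rw [interior_Icc] at ht
    have htI : t ∈ Ioo (0:ℝ) δ := by
      refine ⟨ht.1, ?_⟩
      have : b ≤ δ / 2 := min_le_right _ _
      have := ht.2
      linarith
    have h3 : deriv q t / t < c / 2 := hIoo htI
    have ht0 : (0:ℝ) < t := ht.1
    rw [div_lt_iff₀ ht0] at h3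
    nlinarith
  have hanti : StrictAntiOn q (Icc (0:ℝ) b) :=
    strictAntiOn_of_deriv_neg (convex_Icc 0 b) hcont hderivneg
  have : q b < q 0 := hanti (left_mem_Icc.2 hbpos.le) (right_mem_Icc.2 hbpos.le) hbpos
  have : q b < 0 := by rwa [h0] at this
  exact absurd (hbmem b (right_mem_Icc.2 hbpos.le)).1 (not_le.2 this)

end OneD

section Line

variable {V : Type} [NormedAddCommGroup V] [NormedSpace ℝ V]
variable {F : Type} [NormedAddCommGroup F] [NormedSpace ℝ F]

/-- Derivative of a function along a line. -/
lemma hasDerivAt_line {f : V → F} {x d : V} {t₀ : ℝ}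
    (hf : DifferentiableAt ℝ f (x + t₀ • d)) :
    HasDerivAt (fun t => f (x + t • d)) (fderiv ℝ f (x + t₀ • d) d) t₀ := by
  have hline : HasDerivAt (fun t : ℝ => x + t • d) d t₀ := by
    simpa using ((hasDerivAt_id t₀).smul_const d).const_add x
  exact (hf.hasFDerivAt.comp_hasDerivAt t₀ hline)

lemma hasDerivAt_line_apply {f : V → (V →L[ℝ] ℝ)} {x d u : V} {t₀ : ℝ}
    (hf : DifferentiableAt ℝ f (x + t₀ • d)) :
    HasDerivAt (fun t => f (x + t • d) u) (fderiv ℝ f (x + t₀ • d) d u) t₀ := by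
  have h1 := hasDerivAt_line hf
  have h2 := h1.clm_apply (hasDerivAt_const t₀ u)
  simpa using h2

end Line


section Euler

variable {V : Type} [NormedAddCommGroup V] [NormedSpace ℝ V]
variable {Astar : Set V} {L : V → ℝ}

/-- Euler's identity: `DL(x)(x) = 2 L(x)`. -/
lemma euler_one (hO : IsOpen Astar)
    (hsm : ∀ v ∈ Astar, ContDiffAt ℝ (⊤ : ℕ∞) L v)
    (hhom : ∀ v ∈ Astar, ∀ t : ℝ, 0 < t → L (t • v) = t ^ 2 * L v)
    {x : V} (hx : x ∈ Astar) : fderiv ℝ L x x = 2 * L x := by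
  have hdiff : DifferentiableAt ℝ L x := (hsm x hx).differentiableAt (by simp)
  have h1 : HasDerivAt (fun t : ℝ => L ((0:V) + t • x)) (fderiv ℝ L ((0:V) + (1:ℝ) • x) x) 1 :=
    hasDerivAt_line (by simpa using hdiff)
  simp only [zero_add, one_smul] at h1
  have h2 : HasDerivAt (fun t : ℝ => t ^ 2 * L x) (2 * L x) 1 := by
    simpa using (hasDerivAt_pow 2 (1:ℝ)).mul_const (L x)
  have hS : IsOpen {t : ℝ | 0 < t ∧ t • x ∈ Astar} :=
    isOpen_Ioi.inter (hO.preimage (continuous_id.smul continuous_const))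
  have hmem : (1:ℝ) ∈ {t : ℝ | 0 < t ∧ t • x ∈ Astar} := by simp [hx]
  have heq : (fun t : ℝ => L (t • x)) =ᶠ[𝓝 (1:ℝ)] (fun t : ℝ => t ^ 2 * L x) := by
    filter_upwards [hS.mem_nhds hmem] with t ht
    exact hhom x hx t ht.1
  have h1' : HasDerivAt (fun t : ℝ => t ^ 2 * L x) (fderiv ℝ L x x) 1 := by
    refine h1.congr_of_eventuallyEq ?_
    exact heq.symm
  exact h1'.unique h2

/-- Homogeneity of the derivative: `DL(t x)(u) = t · DL(x)(u)`. -/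
lemma fderiv_homog (hO : IsOpen Astar)
    (hsm : ∀ v ∈ Astar, ContDiffAt ℝ (⊤ : ℕ∞) L v)
    (hcone : ∀ v ∈ Astar, ∀ t : ℝ, 0 < t → t • v ∈ Astar)
    (hhom : ∀ v ∈ Astar, ∀ t : ℝ, 0 < t → L (t • v) = t ^ 2 * L v)
    {x : V} (hx : x ∈ Astar) {t : ℝ} (ht : 0 < t) (u : V) :
    fderiv ℝ L (t • x) u = t * fderiv ℝ L x u := by
  have htx : t • x ∈ Astar := hcone x hx t ht
  have hdiff : DifferentiableAt ℝ L (t • x) := (hsm _ htx).differentiableAt (by simp)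
  have hsmul : HasFDerivAt (fun y : V => t • y) (t • ContinuousLinearMap.id ℝ V) x := by
    have := (t • ContinuousLinearMap.id ℝ V).hasFDerivAt (x := x)
    exact this
  have h1 : HasFDerivAt (fun y => L (t • y))
      ((fderiv ℝ L (t • x)).comp (t • ContinuousLinearMap.id ℝ V)) x :=
    (hdiff.hasFDerivAt).comp x hsmul
  have h2 : HasFDerivAt (fun y => t ^ 2 * L y) ((t ^ 2) • fderiv ℝ L x) x :=
    ((hsm x hx).differentiableAt (by simp)).hasFDerivAt.const_mul (t ^ 2)
  have heq : (fun y => L (t • y)) =ᶠ[𝓝 x] (fun y => t ^ 2 * L y) := by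
    filter_upwards [hO.mem_nhds hx] with y hy
    exact hhom y hy t ht
  have h1' : HasFDerivAt (fun y => t ^ 2 * L y)
      ((fderiv ℝ L (t • x)).comp (t • ContinuousLinearMap.id ℝ V)) x :=
    h1.congr_of_eventuallyEq heq.symm
  have hCLM := h1'.unique h2
  have := congrArg (fun (φ : V →L[ℝ] ℝ) => φ u) hCLM
  simp only [ContinuousLinearMap.comp_apply, ContinuousLinearMap.smul_apply,
    ContinuousLinearMap.id_apply, smul_eq_mul, ContinuousLinearMap.coe_comp'] at this
  have ht' : t ≠ 0 := ne_of_gt ht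
  have hmap : t * fderiv ℝ L (t • x) u = t * (t * fderiv ℝ L x u) := by
    rw [← smul_eq_mul, ← map_smul, this]; ring
  exact mul_left_cancel₀ ht' hmap

/-- Euler's identity for the second derivative: `D²L(x)(x,u) = DL(x)(u)`. -/
lemma euler_two (hO : IsOpen Astar)
    (hsm : ∀ v ∈ Astar, ContDiffAt ℝ (⊤ : ℕ∞) L v)
    (hcone : ∀ v ∈ Astar, ∀ t : ℝ, 0 < t → t • v ∈ Astar)
    (hhom : ∀ v ∈ Astar, ∀ t : ℝ, 0 < t → L (t • v) = t ^ 2 * L v)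
    {x : V} (hx : x ∈ Astar) (u : V) :
    fderiv ℝ (fderiv ℝ L) x x u = fderiv ℝ L x u := by
  have hdiff : DifferentiableAt ℝ (fderiv ℝ L) x :=
    ((hsm x hx).fderiv_right (m := 1) (by exact WithTop.coe_le_coe.2 le_top)).differentiableAt (by simp)
  have h1 : HasDerivAt (fun s : ℝ => fderiv ℝ L ((0:V) + s • x) u)
      (fderiv ℝ (fderiv ℝ L) ((0:V) + (1:ℝ) • x) x u) 1 :=
    hasDerivAt_line_apply (by simpa using hdiff)
  simp only [zero_add, one_smul] at h1
  have h2 : HasDerivAt (fun s : ℝ => s * fderiv ℝ L x u) (fderiv ℝ L x u) 1 := by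
    simpa using hasDerivAt_mul_const (fderiv ℝ L x u) (x := (1:ℝ))
  have hS : IsOpen {s : ℝ | 0 < s ∧ s • x ∈ Astar} :=
    isOpen_Ioi.inter (hO.preimage (continuous_id.smul continuous_const))
  have hmem : (1:ℝ) ∈ {s : ℝ | 0 < s ∧ s • x ∈ Astar} := by simp [hx]
  have heq : (fun s : ℝ => fderiv ℝ L (s • x) u) =ᶠ[𝓝 (1:ℝ)]
      (fun s : ℝ => s * fderiv ℝ L x u) := by
    filter_upwards [hS.mem_nhds hmem] with s hs
    exact fderiv_homog hO hsm hcone hhom hx hs.1 u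
  have h1' : HasDerivAt (fun s : ℝ => s * fderiv ℝ L x u)
      (fderiv ℝ (fderiv ℝ L) x x u) 1 := h1.congr_of_eventuallyEq heq.symm
  exact h1'.unique h2

end Euler

end Helpers

set_option maxHeartbeats 1600000 in
/-- Proposition 2.2(v): for a lightlike vector `v`, the closed cone lies on one side of
the tangent hyperplane to the lightcone at `v` (`g_v(v,w) ≥ 0` for `w ∈ closure A`),
and the intersection of the closed cone with that hyperplane is exactly the ray
through `v`. -/
theorem finsler_lightcone_convexity
    {V : Type} [NormedAddCommGroup V] [NormedSpace ℝ V] [FiniteDimensional ℝ V]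
    {n : ℕ} (hn : 2 ≤ n) (hdim : Module.finrank ℝ V = n)
    (A : Set V) (hA_open : IsOpen A) (hA_ne : A.Nonempty)
    (hA0 : (0 : V) ∉ A) (hA_conv : Convex ℝ A)
    (hA_cone : ∀ v ∈ A, ∀ t : ℝ, 0 < t → t • v ∈ A)
    (hA_salient : ∀ v : V, v ∈ closure A → -v ∈ closure A → v = 0)
    (Astar : Set V) (hAstar_open : IsOpen Astar) (hAstar0 : (0 : V) ∉ Astar)
    (hAstar_cone : ∀ v ∈ Astar, ∀ t : ℝ, 0 < t → t • v ∈ Astar)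
    (hAhat_sub : closure A \ {0} ⊆ Astar)
    (L : V → ℝ)
    (hL_smooth : ∀ v ∈ Astar, ContDiffAt ℝ (⊤ : ℕ∞) L v)
    (hL_homog : ∀ v ∈ Astar, ∀ t : ℝ, 0 < t → L (t • v) = t ^ 2 * L v)
    (hL_pos : ∀ v ∈ A, 0 < L v)
    (hL_null : ∀ v ∈ closure A \ A, v ≠ 0 → L v = 0)
    (hL_conv : Convex ℝ {v ∈ A | 1 ≤ L v})
    (hg_nondeg : ∀ v ∈ closure A \ A, v ≠ 0 →
      ∀ u : V, (∀ w : V, fundamentalTensor L v u w = 0) → u = 0)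
    (v : V) (hv : v ∈ closure A \ A) (hv0 : v ≠ 0) :
    (∀ w ∈ closure A, 0 ≤ fundamentalTensor L v v w) ∧
    (∀ w : V, (w ∈ closure A ∧ fundamentalTensor L v v w = 0) ↔
      ∃ t : ℝ, 0 ≤ t ∧ w = t • v) := by
  obtain ⟨z₀, hz₀⟩ := hA_ne
  -- basic cone facts
  have hsubA : A ⊆ Astar := fun x hx =>
    hAhat_sub ⟨subset_closure hx, fun h => hA0 (by simpa [Set.mem_singleton_iff.1 h] using hx)⟩
  have hvA : v ∈ Astar := hAhat_sub ⟨hv.1, by simpa using hv0⟩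
  have hK : ∀ x ∈ closure A, ∀ t : ℝ, 0 < t → t • x ∈ closure A := fun x hx t ht =>
    map_mem_closure (continuous_const_smul t) hx (fun a ha => hA_cone a ha t ht)
  have h0cl : (0 : V) ∈ closure A := by
    have Ta : Filter.Tendsto (fun s : ℝ => s • z₀) (𝓝[>] (0:ℝ)) (𝓝 (0 : V)) := by
      have : Filter.Tendsto (fun s : ℝ => s • z₀) (𝓝 (0:ℝ)) (𝓝 ((0:ℝ) • z₀)) :=
        ((continuous_id.smul continuous_const).tendsto (0:ℝ))
      simpa using this.mono_left nhdsWithin_le_nhds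
    refine mem_closure_of_tendsto Ta ?_
    filter_upwards [self_mem_nhdsWithin] with s hs
    exact hA_cone z₀ hz₀ s hs
  have hM : ∀ x ∈ closure A, ∀ z ∈ A, x + z ∈ A := by
    intro x hx z hz
    have h2x : (2:ℝ) • x ∈ closure A := hK x hx 2 two_pos
    have h2z : (2:ℝ) • z ∈ interior A := by
      rw [hA_open.interior_eq]; exact hA_cone z hz 2 two_pos
    have hseg : x + z ∈ openSegment ℝ ((2:ℝ) • x) ((2:ℝ) • z) := by
      refine ⟨1/2, 1/2, by norm_num, by norm_num, by norm_num, ?_⟩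
      module
    have := hA_conv.openSegment_closure_interior_subset_interior h2x h2z hseg
    rwa [hA_open.interior_eq] at this
  have hAdd : ∀ x ∈ A, ∀ y ∈ A, x + y ∈ A := fun x hx y hy => hM x (subset_closure hx) y hy
  -- differentiability facts
  have hdiffL : ∀ p ∈ Astar, DifferentiableAt ℝ L p := fun p hp =>
    (hL_smooth p hp).differentiableAt (by simp)
  have hdiffL1 : ∀ p ∈ Astar, DifferentiableAt ℝ (fderiv ℝ L) p := fun p hp =>
    ((hL_smooth p hp).fderiv_right (m := 1) (by exact WithTop.coe_le_coe.2 le_top)).differentiableAt (by simp)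
  have hfund : ∀ p u w : V, fundamentalTensor L p u w =
      (1/2) * fderiv ℝ (fderiv ℝ L) p u w := by
    intro p u w
    rw [fundamentalTensor, iteratedFDeriv_two_apply]
    norm_num
  have hE1 : ∀ p ∈ Astar, fderiv ℝ L p p = 2 * L p := fun p hp =>
    euler_one hAstar_open hL_smooth hL_homog hp
  have hE2 : ∀ p ∈ Astar, ∀ u, fderiv ℝ (fderiv ℝ L) p p u = fderiv ℝ L p u := fun p hp =>
    euler_two hAstar_open hL_smooth hAstar_cone hL_homog hp
  have hLv : L v = 0 := hL_null v hv hv0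
  -- P1 : at any lightlike point, the derivative is nonnegative on the closed cone
  have hP1 : ∀ ℓ, ℓ ∈ closure A → ℓ ∉ A → ℓ ≠ 0 → ∀ y ∈ closure A, 0 ≤ fderiv ℝ L ℓ y := by
    intro ℓ hℓc hℓA hℓ0 y hy
    have hℓs : ℓ ∈ Astar := hAhat_sub ⟨hℓc, by simpa using hℓ0⟩
    have hLℓ : L ℓ = 0 := hL_null ℓ ⟨hℓc, hℓA⟩ hℓ0
    have hder : HasDerivAt (fun t : ℝ => L (ℓ + t • (y - ℓ))) (fderiv ℝ L ℓ (y - ℓ)) 0 := by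
      have := hasDerivAt_line (f := L) (x := ℓ) (d := y - ℓ) (t₀ := 0)
        (by simpa using hdiffL ℓ hℓs)
      simpa using this
    have h0 : L (ℓ + (0:ℝ) • (y - ℓ)) = 0 := by simpa using hLℓ
    have hev : ∀ᶠ t in 𝓝[>] (0:ℝ), 0 ≤ L (ℓ + t • (y - ℓ)) := by
      filter_upwards [Ioo_mem_nhdsGT one_pos] with t ht
      set p := ℓ + t • (y - ℓ) with hp
      have hpc : p = (1 - t) • ℓ + t • y := by rw [hp]; module
      have hpcl : p ∈ closure A := by
        rw [hpc]
        exact hA_conv.closure hℓc hy (by linarith [ht.1, ht.2]) ht.1.le (by ring)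
      have hpne : p ≠ 0 := by
        intro hpe
        rcases eq_or_ne y 0 with hy0 | hy0
        · rw [hpc, hy0, smul_zero, add_zero] at hpe
          have h1t : (1:ℝ) - t ≠ 0 := by linarith [ht.2]
          exact hℓ0 ((smul_eq_zero.1 hpe).resolve_left h1t)
        · have hty : t • y ∈ closure A := hK y hy t ht.1
          have hneg : -((1 - t) • ℓ) ∈ closure A := by
            have : -((1 - t) • ℓ) = t • y := by
              rw [hpc] at hpe
              exact neg_eq_of_add_eq_zero_right hpe
            rwa [this]
          have h1tℓ : (1 - t) • ℓ ∈ closure A := hK ℓ hℓc (1 - t) (by linarith [ht.2])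
          have := hA_salient _ h1tℓ hneg
          have h1t : (1:ℝ) - t ≠ 0 := by linarith [ht.2]
          exact hℓ0 ((smul_eq_zero.1 this).resolve_left h1t)
      by_cases hpA : p ∈ A
      · exact (hL_pos p hpA).le
      · exact (hL_null p ⟨hpcl, hpA⟩ hpne).ge
    have := deriv_nonneg_of_nonneg hder h0 hev
    have hsub : fderiv ℝ L ℓ (y - ℓ) = fderiv ℝ L ℓ y - 2 * L ℓ := by
      rw [map_sub, hE1 ℓ hℓs]
    rw [hsub, hLℓ] at this
    linarith
  -- P3 : the derivative at v is strictly positive on A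
  have hφne : ∃ z', fderiv ℝ L v z' ≠ 0 := by
    by_contra hcon
    push_neg at hcon
    have := hg_nondeg v hv hv0 v (fun w => by
      rw [hfund, hE2 v hvA, hcon w, mul_zero])
    exact hv0 this
  have hφpos : ∀ u ∈ A, 0 < fderiv ℝ L v u := by
    intro u hu
    rcases lt_or_eq_of_le (hP1 v hv.1 hv.2 hv0 u (subset_closure hu)) with h | h
    · exact h
    · exfalso
      obtain ⟨z', hz'⟩ := hφne
      have he : ∃ e : V, fderiv ℝ L v e < 0 := by
        rcases lt_or_gt_of_ne hz' with h' | h'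
        · exact ⟨z', h'⟩
        · exact ⟨-z', by rw [map_neg]; linarith⟩
      obtain ⟨e, he⟩ := he
      obtain ⟨r, hr, hball⟩ := Metric.isOpen_iff.1 hA_open u hu
      set ε := r / (2 * (‖e‖ + 1)) with hε
      have hεpos : 0 < ε := by positivity
      have hmem : u + ε • e ∈ A := by
        apply hball
        rw [Metric.mem_ball, dist_eq_norm]
        have : ‖u + ε • e - u‖ = ε * ‖e‖ := by
          rw [add_sub_cancel_left, norm_smul, Real.norm_eq_abs, abs_of_pos hεpos]
        rw [this, hε]
        rw [div_mul_eq_mul_div, div_lt_iff₀ (by positivity)]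
        nlinarith [norm_nonneg e]
      have := hP1 v hv.1 hv.2 hv0 (u + ε • e) (subset_closure hmem)
      rw [map_add, map_smul] at this
      simp only [smul_eq_mul] at this
      nlinarith
  -- superadditivity of sqrt(L) on A
  have hS : ∀ x ∈ A, ∀ y ∈ A, Real.sqrt (L x) + Real.sqrt (L y) ≤ Real.sqrt (L (x + y)) := by
    intro x hx y hy
    set a := Real.sqrt (L x) with ha
    set b := Real.sqrt (L y) with hb
    have hapos : 0 < a := Real.sqrt_pos.2 (hL_pos x hx)
    have hbpos : 0 < b := Real.sqrt_pos.2 (hL_pos y hy)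
    have ha2 : a ^ 2 = L x := Real.sq_sqrt (hL_pos x hx).le
    have hb2 : b ^ 2 = L y := Real.sq_sqrt (hL_pos y hy).le
    have hx' : a⁻¹ • x ∈ A := hA_cone x hx a⁻¹ (inv_pos.2 hapos)
    have hy' : b⁻¹ • y ∈ A := hA_cone y hy b⁻¹ (inv_pos.2 hbpos)
    have hLx' : L (a⁻¹ • x) = 1 := by
      rw [hL_homog x (hsubA hx) a⁻¹ (inv_pos.2 hapos), ← ha2]
      field_simp
    have hLy' : L (b⁻¹ • y) = 1 := by
      rw [hL_homog y (hsubA hy) b⁻¹ (inv_pos.2 hbpos), ← hb2]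
      field_simp
    have hmem := hL_conv (x := a⁻¹ • x) (y := b⁻¹ • y) ⟨hx', hLx'.ge⟩ ⟨hy', hLy'.ge⟩
      (a := a / (a + b)) (b := b / (a + b)) (by positivity) (by positivity)
      (by field_simp)
    have hcombo : (a / (a + b)) • (a⁻¹ • x) + (b / (a + b)) • (b⁻¹ • y)
        = (a + b)⁻¹ • (x + y) := by
      rw [smul_smul, smul_smul, smul_add]
      congr 1 <;> congr 1 <;> (field_simp; try ring)
    rw [hcombo] at hmem
    have hxy : x + y ∈ A := hAdd x hx y hy
    have hL1 : (1:ℝ) ≤ ((a+b)⁻¹) ^ 2 * L (x + y) := by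
      rw [← hL_homog (x + y) (hsubA hxy) (a+b)⁻¹ (by positivity)]
      exact hmem.2
    have habpos : (0:ℝ) < a + b := by linarith
    have hge : (a + b) ^ 2 ≤ L (x + y) := by
      rw [inv_pow] at hL1
      rw [← mul_le_mul_iff_right₀ (show (0:ℝ) < ((a+b)^2)⁻¹ by positivity)]
      calc ((a+b)^2)⁻¹ * (a+b)^2 = 1 := by field_simp
        _ ≤ ((a+b)^2)⁻¹ * L (x+y) := hL1
    calc a + b = Real.sqrt ((a + b) ^ 2) := (Real.sqrt_sq habpos.le).symm
      _ ≤ Real.sqrt (L (x + y)) := Real.sqrt_le_sqrt hge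
  -- fundamental inequality
  have hFI : ∀ x ∈ A, ∀ y ∈ A,
      2 * Real.sqrt (L x) * Real.sqrt (L y) ≤ fderiv ℝ L x y := by
    intro x hx y hy
    set a := Real.sqrt (L x) with ha
    set b := Real.sqrt (L y) with hb
    have hapos : 0 < a := Real.sqrt_pos.2 (hL_pos x hx)
    have hbpos : 0 < b := Real.sqrt_pos.2 (hL_pos y hy)
    have ha2 : a ^ 2 = L x := Real.sq_sqrt (hL_pos x hx).le
    have hb2 : b ^ 2 = L y := Real.sq_sqrt (hL_pos y hy).le
    have hf0 : L (x + (0:ℝ) • (y - x)) = L x := by simp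
    have hfder : HasDerivAt (fun t : ℝ => L (x + t • (y - x))) (fderiv ℝ L x (y - x)) 0 := by
      have := hasDerivAt_line (f := L) (x := x) (d := y - x) (t₀ := 0)
        (by simpa using hdiffL x (hsubA hx))
      simpa using this
    have hkder : HasDerivAt (fun t : ℝ => Real.sqrt (L (x + t • (y - x))))
        (1 / (2 * a) * fderiv ℝ L x (y - x)) 0 := by
      have hne : L (x + (0:ℝ) • (y - x)) ≠ 0 := by rw [hf0]; exact (hL_pos x hx).ne'
      have := (Real.hasDerivAt_sqrt hne).comp 0 hfder
      simp only [hf0] at this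
      exact this
    have hslope : ∀ᶠ t in 𝓝[>] (0:ℝ),
        b - a ≤ ((fun t : ℝ => Real.sqrt (L (x + t • (y - x)))) t
          - (fun t : ℝ => Real.sqrt (L (x + t • (y - x)))) 0) / t := by
      filter_upwards [Ioo_mem_nhdsGT one_pos] with t ht
      have h1t : (0:ℝ) < 1 - t := by linarith [ht.2]
      have hx1 : (1 - t) • x ∈ A := hA_cone x hx (1 - t) h1t
      have hy1 : t • y ∈ A := hA_cone y hy t ht.1
      have hsum := hS _ hx1 _ hy1
      have he1 : L ((1 - t) • x) = (1 - t) ^ 2 * L x := hL_homog x (hsubA hx) (1 - t) h1t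
      have he2 : L (t • y) = t ^ 2 * L y := hL_homog y (hsubA hy) t ht.1
      have hs1 : Real.sqrt (L ((1 - t) • x)) = (1 - t) * a := by
        rw [he1, ← ha2, ← mul_pow, Real.sqrt_sq (mul_pos h1t hapos).le]
      have hs2 : Real.sqrt (L (t • y)) = t * b := by
        rw [he2, ← hb2, ← mul_pow, Real.sqrt_sq (mul_pos ht.1 hbpos).le]
      have hpt : x + t • (y - x) = (1 - t) • x + t • y := by module
      rw [hs1, hs2, ← hpt] at hsum
      simp only [hf0, ha]
      rw [le_div_iff₀ ht.1]
      -- hsum : (1-t)*a + t*b ≤ sqrt (L (x + t • (y-x)))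
      have : Real.sqrt (L x) = a := rfl
      rw [this]
      nlinarith [hsum]
    have hder := le_deriv_of_slope hkder hslope
    have hsub : fderiv ℝ L x (y - x) = fderiv ℝ L x y - 2 * L x := by
      rw [map_sub, hE1 x (hsubA hx)]
    rw [hsub, ← ha2] at hder
    have h2a : (0:ℝ) < 2 * a := by linarith
    have key : 2 * a * (b - a) ≤ fderiv ℝ L x y - 2 * a ^ 2 := by
      have h := mul_le_mul_of_nonneg_left hder h2a.le
      calc 2 * a * (b - a) ≤ 2 * a * (1 / (2 * a) * (fderiv ℝ L x y - 2 * a ^ 2)) := h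
        _ = fderiv ℝ L x y - 2 * a ^ 2 := by field_simp
    nlinarith [key]
  -- interior second-order inequality
  have hII : ∀ x ∈ A, ∀ u : V,
      L x * fderiv ℝ (fderiv ℝ L) x u u ≤ (1/2) * (fderiv ℝ L x u) ^ 2 := by
    intro x hx u
    set c1 := fderiv ℝ L x u with hc1
    set q : ℝ → ℝ := fun t => (L x + t * (c1 / 2)) ^ 2 - L x * L (x + t • u) with hq
    have hq0 : q 0 = 0 := by simp [hq]; ring
    have hline_mem : ∀ᶠ t in 𝓝 (0:ℝ), x + t • u ∈ A := by
      have hc : Continuous (fun t : ℝ => x + t • u) :=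
        continuous_const.add (continuous_id.smul continuous_const)
      have hT : Filter.Tendsto (fun t : ℝ => x + t • u) (𝓝 0) (𝓝 x) := by
        have := hc.tendsto 0
        simpa using this
      exact hT (hA_open.mem_nhds hx)
    have hline_star : ∀ᶠ t in 𝓝 (0:ℝ), x + t • u ∈ Astar := by
      filter_upwards [hline_mem] with t ht
      exact hsubA ht
    have hqpos : ∀ᶠ t in 𝓝 (0:ℝ), 0 ≤ q t := by
      filter_upwards [hline_mem] with t ht
      set y := x + t • u with hy
      have hFIxy := hFI x hx y ht
      have hphi : fderiv ℝ L x y = 2 * L x + t * c1 := by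
        rw [hy, map_add, map_smul, hE1 x (hsubA hx)]
        simp only [smul_eq_mul, hc1]
        try ring
      have hsx : Real.sqrt (L x) ^ 2 = L x := Real.sq_sqrt (hL_pos x hx).le
      have hsy : Real.sqrt (L y) ^ 2 = L y := Real.sq_sqrt (hL_pos y ht).le
      have hsx0 : 0 ≤ Real.sqrt (L x) := Real.sqrt_nonneg _
      have hsy0 : 0 ≤ Real.sqrt (L y) := Real.sqrt_nonneg _
      rw [hphi] at hFIxy
      simp only [hq]
      nlinarith [hFIxy, mul_nonneg hsx0 hsy0]
    -- derivative of q
    have hqderiv : ∀ᶠ t in 𝓝 (0:ℝ), HasDerivAt q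
        (c1 * (L x + t * (c1 / 2)) - L x * fderiv ℝ L (x + t • u) u) t := by
      filter_upwards [hline_star] with t ht
      have h1 : HasDerivAt (fun s : ℝ => (L x + s * (c1 / 2)) ^ 2)
          (2 * (L x + t * (c1 / 2)) * (c1 / 2)) t := by
        have hb : HasDerivAt (fun s : ℝ => L x + s * (c1 / 2)) (c1 / 2) t := by
          simpa using (hasDerivAt_mul_const (c1 / 2) (x := t)).const_add (L x)
        simpa using hb.fun_pow 2
      have h2 : HasDerivAt (fun s : ℝ => L (x + s • u)) (fderiv ℝ L (x + t • u) u) t :=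
        hasDerivAt_line (hdiffL _ ht)
      have := h1.fun_sub ((h2.const_mul (L x)))
      rw [show c1 * (L x + t * (c1 / 2)) - L x * fderiv ℝ L (x + t • u) u
        = 2 * (L x + t * (c1 / 2)) * (c1 / 2) - L x * fderiv ℝ L (x + t • u) u by ring]
      exact this
    have hqdiff : ∀ᶠ t in 𝓝 (0:ℝ), DifferentiableAt ℝ q t := by
      filter_upwards [hqderiv] with t ht
      exact ht.differentiableAt
    have hderiv_eq : (fun t => c1 * (L x + t * (c1 / 2)) - L x * fderiv ℝ L (x + t • u) u)
        =ᶠ[𝓝 (0:ℝ)] deriv q := by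
      filter_upwards [hqderiv] with t ht
      exact ht.deriv.symm
    have hr : HasDerivAt (fun t => c1 * (L x + t * (c1 / 2)) - L x * fderiv ℝ L (x + t • u) u)
        (c1 * (c1 / 2) - L x * fderiv ℝ (fderiv ℝ L) x u u) 0 := by
      have h1 : HasDerivAt (fun t : ℝ => c1 * (L x + t * (c1 / 2))) (c1 * (c1 / 2)) 0 := by
        have hb : HasDerivAt (fun s : ℝ => L x + s * (c1 / 2)) (c1 / 2) 0 := by
          simpa using (hasDerivAt_mul_const (c1 / 2) (x := (0:ℝ))).const_add (L x)
        simpa using hb.const_mul c1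
      have h2 : HasDerivAt (fun t : ℝ => fderiv ℝ L (x + t • u) u)
          (fderiv ℝ (fderiv ℝ L) x u u) 0 := by
        have := hasDerivAt_line_apply (f := fderiv ℝ L) (x := x) (d := u) (u := u) (t₀ := 0)
          (by simpa using hdiffL1 x (hsubA hx))
        simpa using this
      exact h1.sub (h2.const_mul (L x))
    have hd2 : HasDerivAt (deriv q) (c1 * (c1 / 2) - L x * fderiv ℝ (fderiv ℝ L) x u u) 0 :=
      hr.congr_of_eventuallyEq hderiv_eq.symm
    have := second_deriv_nonneg_of_nonneg hqpos hq0 hqdiff hd2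
    nlinarith [this]
  -- symmetry of the second derivative at v
  have hsym : ∀ a b : V, fderiv ℝ (fderiv ℝ L) v a b = fderiv ℝ (fderiv ℝ L) v b a := by
    have hf : ∀ᶠ y in 𝓝 v, HasFDerivAt L (fderiv ℝ L y) y := by
      filter_upwards [hAstar_open.mem_nhds hvA] with y hy
      exact (hdiffL y hy).hasFDerivAt
    exact second_derivative_symmetric_of_eventually hf (hdiffL1 v hvA).hasFDerivAt
  -- P5 : the second fundamental form is ≤ 0 on the tangent hyperplane
  have hP5 : ∀ u : V, fderiv ℝ L v u = 0 → fderiv ℝ (fderiv ℝ L) v u u ≤ 0 := by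
    intro u hu
    have hBpos : 0 < fderiv ℝ L v z₀ := hφpos z₀ hz₀
    have hxs : ∀ s : ℝ, 0 < s → v + s • z₀ ∈ A := fun s hs =>
      hM v hv.1 (s • z₀) (hA_cone z₀ hz₀ s hs)
    -- continuity of the second derivative
    have hL2cont : ContinuousAt (fderiv ℝ (fderiv ℝ L)) v := by
      have h1 : ContDiffAt ℝ (⊤ : ℕ∞) (fderiv ℝ (fderiv ℝ L)) v :=
        ((hL_smooth v hvA).fderiv_right (m := ((⊤ : ℕ∞) : WithTop ℕ∞)) (by rw [← WithTop.coe_one, ← WithTop.coe_add, top_add])).fderiv_right (m := ((⊤ : ℕ∞) : WithTop ℕ∞)) (by rw [← WithTop.coe_one, ← WithTop.coe_add, top_add])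
      exact h1.continuousAt
    have happly : Continuous (fun B : V →L[ℝ] V →L[ℝ] ℝ => B u u) :=
      ((ContinuousLinearMap.apply ℝ ℝ u).comp
        (ContinuousLinearMap.apply ℝ (V →L[ℝ] ℝ) u)).continuous
    have hTline : Filter.Tendsto (fun s : ℝ => v + s • z₀) (𝓝 0) (𝓝 v) := by
      have hc : Continuous (fun s : ℝ => v + s • z₀) :=
        continuous_const.add (continuous_id.smul continuous_const)
      have := hc.tendsto 0
      simpa using this
    have hTγ : Filter.Tendsto (fun s : ℝ => fderiv ℝ (fderiv ℝ L) (v + s • z₀) u u)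
        (𝓝[>] (0:ℝ)) (𝓝 (fderiv ℝ (fderiv ℝ L) v u u)) := by
      have h1 : Filter.Tendsto (fderiv ℝ (fderiv ℝ L)) (𝓝 v)
          (𝓝 (fderiv ℝ (fderiv ℝ L) v)) := hL2cont
      have h2 := (happly.tendsto (fderiv ℝ (fderiv ℝ L) v)).comp (h1.comp hTline)
      exact h2.mono_left nhdsWithin_le_nhds
    -- slope limits for α and β
    have hαder : HasDerivAt (fun s : ℝ => fderiv ℝ L (v + s • z₀) u)
        (fderiv ℝ (fderiv ℝ L) v z₀ u) 0 := by
      have := hasDerivAt_line_apply (f := fderiv ℝ L) (x := v) (d := z₀) (u := u) (t₀ := 0)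
        (by simpa using hdiffL1 v hvA)
      simpa using this
    have hα0 : fderiv ℝ L (v + (0:ℝ) • z₀) u = 0 := by simpa using hu
    have hTα : Filter.Tendsto (fun s : ℝ => fderiv ℝ L (v + s • z₀) u / s) (𝓝[>] (0:ℝ))
        (𝓝 (fderiv ℝ (fderiv ℝ L) v z₀ u)) := by
      have h1 := (hasDerivAt_iff_tendsto_slope.1 hαder).mono_left
        (nhdsWithin_mono 0 (fun x hx => ne_of_gt hx))
      refine h1.congr' ?_
      filter_upwards [self_mem_nhdsWithin] with s hs
      simp [slope_def_field, hu]
    have hβder : HasDerivAt (fun s : ℝ => L (v + s • z₀)) (fderiv ℝ L v z₀) 0 := by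
      have := hasDerivAt_line (f := L) (x := v) (d := z₀) (t₀ := 0)
        (by simpa using hdiffL v hvA)
      simpa using this
    have hβ0 : L (v + (0:ℝ) • z₀) = 0 := by simpa using hLv
    have hTβ : Filter.Tendsto (fun s : ℝ => L (v + s • z₀) / s) (𝓝[>] (0:ℝ))
        (𝓝 (fderiv ℝ L v z₀)) := by
      have h1 := (hasDerivAt_iff_tendsto_slope.1 hβder).mono_left
        (nhdsWithin_mono 0 (fun x hx => ne_of_gt hx))
      refine h1.congr' ?_
      filter_upwards [self_mem_nhdsWithin] with s hs
      simp [slope_def_field, hLv]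
    -- the quotient bound tends to zero
    have hTρ : Filter.Tendsto
        (fun s : ℝ => (1/2) * (fderiv ℝ L (v + s • z₀) u) ^ 2 / L (v + s • z₀))
        (𝓝[>] (0:ℝ)) (𝓝 0) := by
      have hT1 : Filter.Tendsto
          (fun s : ℝ => (1/2) * (fderiv ℝ L (v + s • z₀) u / s) ^ 2
            * (s * (L (v + s • z₀) / s)⁻¹))
          (𝓝[>] (0:ℝ)) (𝓝 ((1/2) * (fderiv ℝ (fderiv ℝ L) v z₀ u) ^ 2
            * (0 * (fderiv ℝ L v z₀)⁻¹))) := by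
        refine Filter.Tendsto.mul ?_ ?_
        · exact (tendsto_const_nhds.mul (hTα.pow 2))
        · exact Filter.Tendsto.mul (tendsto_id.mono_left nhdsWithin_le_nhds)
            (hTβ.inv₀ (ne_of_gt hBpos))
      simp only [zero_mul, mul_zero] at hT1
      refine hT1.congr' ?_
      filter_upwards [self_mem_nhdsWithin] with s hs
      have hβpos : 0 < L (v + s • z₀) := hL_pos _ (hxs s hs)
      have hs0 : s ≠ 0 := ne_of_gt hs
      have hβ0' : L (v + s • z₀) ≠ 0 := ne_of_gt hβpos
      field_simp
    -- conclude
    have hineq : ∀ᶠ s in 𝓝[>] (0:ℝ),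
        fderiv ℝ (fderiv ℝ L) (v + s • z₀) u u
          ≤ (1/2) * (fderiv ℝ L (v + s • z₀) u) ^ 2 / L (v + s • z₀) := by
      filter_upwards [self_mem_nhdsWithin] with s hs
      have hmem := hxs s hs
      have hβpos : 0 < L (v + s • z₀) := hL_pos _ hmem
      have := hII (v + s • z₀) hmem u
      rw [le_div_iff₀ hβpos, mul_comm]
      linarith [this]
    exact le_of_tendsto_of_tendsto hTγ hTρ hineq
  constructor
  · -- Part 1
    intro w hw
    rw [hfund, hE2 v hvA]
    linarith [hP1 v hv.1 hv.2 hv0 w hw]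
  · -- Part 2
    intro w
    constructor
    · rintro ⟨hwcl, hwf⟩
      have hφw : fderiv ℝ L v w = 0 := by
        rw [hfund, hE2 v hvA] at hwf
        linarith
      by_cases hw0 : w = 0
      · exact ⟨0, le_refl 0, by simp [hw0]⟩
      set d := w - v with hd
      have hφv : fderiv ℝ L v v = 0 := by rw [hE1 v hvA, hLv]; ring
      have hφd : fderiv ℝ L v d = 0 := by rw [hd, map_sub, hφw, hφv, sub_zero]
      have hlam : ∃ lam : ℝ, d = lam • v := by
        by_cases hseg : ∃ t ∈ Set.Ioc (0:ℝ) 1, v + t • d = 0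
        · obtain ⟨t, ht, hteq⟩ := hseg
          refine ⟨-t⁻¹, ?_⟩
          have ht0 : t ≠ 0 := ne_of_gt ht.1
          have h1 : (-v : V) = t • d := neg_eq_of_add_eq_zero_right hteq
          have h2 : d = t⁻¹ • (t • d) := (inv_smul_smul₀ ht0 d).symm
          rw [← h1] at h2
          rw [h2, smul_neg, ← neg_smul]
        · push_neg at hseg
          -- every point of the segment is lightlike
          have hlight : ∀ t ∈ Set.Icc (0:ℝ) 1,
              v + t • d ∈ closure A ∧ v + t • d ∉ A ∧ v + t • d ≠ 0 := by
            intro t ht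
            have hpc : v + t • d = (1 - t) • v + t • w := by rw [hd]; module
            have hpcl : v + t • d ∈ closure A := by
              rw [hpc]
              exact hA_conv.closure hv.1 hwcl (by linarith [ht.2]) ht.1 (by ring)
            have hpne : v + t • d ≠ 0 := by
              rcases eq_or_lt_of_le ht.1 with h0 | h0
              · rw [← h0]; simpa using hv0
              · exact hseg t ⟨h0, ht.2⟩
            have hφp : fderiv ℝ L v (v + t • d) = 0 := by
              rw [map_add, map_smul, hφv, hφd]; simp
            have hpA : v + t • d ∉ A := fun hmem => by
              have := hφpos _ hmem
              rw [hφp] at this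
              exact lt_irrefl 0 this
            exact ⟨hpcl, hpA, hpne⟩
          -- the derivative of L vanishes along the segment in direction d
          have hder0 : ∀ t ∈ Set.Ioo (0:ℝ) 1, fderiv ℝ L (v + t • d) d = 0 := by
            intro t ht
            obtain ⟨hpcl, hpA, hpne⟩ := hlight t ⟨ht.1.le, ht.2.le⟩
            have hps : v + t • d ∈ Astar := hAhat_sub ⟨hpcl, by simpa using hpne⟩
            have hΦv : 0 ≤ fderiv ℝ L (v + t • d) v := hP1 _ hpcl hpA hpne v hv.1
            have hΦw : 0 ≤ fderiv ℝ L (v + t • d) w := hP1 _ hpcl hpA hpne w hwcl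
            have hLp : L (v + t • d) = 0 := hL_null _ ⟨hpcl, hpA⟩ hpne
            have hexp : fderiv ℝ L (v + t • d) (v + t • d)
                = (1 - t) * fderiv ℝ L (v + t • d) v + t * fderiv ℝ L (v + t • d) w := by
              rw [map_add, map_smul, hd, map_sub]
              simp only [smul_eq_mul]
              ring
            have hzero : (1 - t) * fderiv ℝ L (v + t • d) v
                + t * fderiv ℝ L (v + t • d) w = 0 := by
              rw [← hexp, hE1 _ hps, hLp]; ring
            have h1 : (1 - t) * fderiv ℝ L (v + t • d) v = 0 :=
              le_antisymm (by nlinarith [mul_nonneg ht.1.le hΦw])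
                (mul_nonneg (by linarith [ht.2]) hΦv)
            have hΦv0 : fderiv ℝ L (v + t • d) v = 0 := by
              rcases mul_eq_zero.1 h1 with h | h
              · exfalso; linarith [ht.2]
              · exact h
            have hΦw0 : fderiv ℝ L (v + t • d) w = 0 := by
              have h2 : t * fderiv ℝ L (v + t • d) w = 0 := by linarith [hzero, h1]
              rcases mul_eq_zero.1 h2 with h | h
              · exfalso; linarith [ht.1]
              · exact h
            rw [hd, map_sub, hΦv0, hΦw0]
            ring
          -- hence the second fundamental form vanishes on d
          have hdd : fderiv ℝ (fderiv ℝ L) v d d = 0 := by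
            have hder : HasDerivAt (fun t : ℝ => fderiv ℝ L (v + t • d) d)
                (fderiv ℝ (fderiv ℝ L) v d d) 0 := by
              have := hasDerivAt_line_apply (f := fderiv ℝ L) (x := v) (d := d) (u := d)
                (t₀ := 0) (by simpa using hdiffL1 v hvA)
              simpa using this
            have h00 : fderiv ℝ L (v + (0:ℝ) • d) d = 0 := by simpa using hφd
            refine deriv_eq_zero_of_eventually_zero hder h00 ?_
            filter_upwards [Ioo_mem_nhdsGT one_pos] with t ht
            exact hder0 t ht
          -- Cauchy-Schwarz on the tangent hyperplane
          have hCS : ∀ u : V, fderiv ℝ L v u = 0 → fderiv ℝ (fderiv ℝ L) v d u = 0 := by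
            intro u hu
            have hQ : fderiv ℝ (fderiv ℝ L) v u u ≤ 0 := hP5 u hu
            have hkey : ∀ t : ℝ, 2 * t * fderiv ℝ (fderiv ℝ L) v d u
                + t ^ 2 * fderiv ℝ (fderiv ℝ L) v u u ≤ 0 := by
              intro t
              have hφdu : fderiv ℝ L v (d + t • u) = 0 := by
                rw [map_add, map_smul, hφd, hu]; simp
              have h := hP5 (d + t • u) hφdu
              have hexp : fderiv ℝ (fderiv ℝ L) v (d + t • u) (d + t • u)
                  = fderiv ℝ (fderiv ℝ L) v d d + 2 * t * fderiv ℝ (fderiv ℝ L) v d u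
                    + t ^ 2 * fderiv ℝ (fderiv ℝ L) v u u := by
                rw [map_add, map_smul]
                simp only [ContinuousLinearMap.add_apply, ContinuousLinearMap.coe_smul',
                  Pi.smul_apply, map_add, map_smul, smul_eq_mul]
                rw [hsym u d]
                ring
              rw [hexp, hdd] at h
              linarith
            have h1Q : (0:ℝ) < 1 - fderiv ℝ (fderiv ℝ L) v u u := by linarith
            have h2 := hkey (fderiv ℝ (fderiv ℝ L) v d u / (1 - fderiv ℝ (fderiv ℝ L) v u u))
            have hG2 : (fderiv ℝ (fderiv ℝ L) v d u) ^ 2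
                * (2 - fderiv ℝ (fderiv ℝ L) v u u) ≤ 0 := by
              have hmul := mul_le_mul_of_nonneg_left h2
                (le_of_lt (by positivity : (0:ℝ) < (1 - fderiv ℝ (fderiv ℝ L) v u u) ^ 2))
              calc (fderiv ℝ (fderiv ℝ L) v d u) ^ 2 * (2 - fderiv ℝ (fderiv ℝ L) v u u)
                  = (1 - fderiv ℝ (fderiv ℝ L) v u u) ^ 2
                    * (2 * (fderiv ℝ (fderiv ℝ L) v d u
                        / (1 - fderiv ℝ (fderiv ℝ L) v u u))
                      * fderiv ℝ (fderiv ℝ L) v d u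
                    + (fderiv ℝ (fderiv ℝ L) v d u
                        / (1 - fderiv ℝ (fderiv ℝ L) v u u)) ^ 2
                      * fderiv ℝ (fderiv ℝ L) v u u) := by
                    field_simp
                    ring
                _ ≤ 0 := by nlinarith [hmul]
            have hsq : (fderiv ℝ (fderiv ℝ L) v d u) ^ 2 = 0 :=
              le_antisymm (by nlinarith [hG2, mul_nonneg (sq_nonneg
                (fderiv ℝ (fderiv ℝ L) v d u)) (neg_nonneg.2 hQ)]) (sq_nonneg _)
            exact (pow_eq_zero_iff (by norm_num : (2:ℕ) ≠ 0)).1 hsq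
          -- linear dependence via nondegeneracy
          have hz₀pos : 0 < fderiv ℝ L v z₀ := hφpos z₀ hz₀
          have hz₀ne : fderiv ℝ L v z₀ ≠ 0 := ne_of_gt hz₀pos
          refine ⟨fderiv ℝ (fderiv ℝ L) v d z₀ / fderiv ℝ L v z₀, ?_⟩
          have hlin : ∀ u : V, fderiv ℝ (fderiv ℝ L) v d u
              = fderiv ℝ (fderiv ℝ L) v d z₀ / fderiv ℝ L v z₀ * fderiv ℝ L v u := by
            intro u
            have hc : fderiv ℝ L v (u - (fderiv ℝ L v u / fderiv ℝ L v z₀) • z₀) = 0 := by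
              rw [map_sub, map_smul]
              simp only [smul_eq_mul]
              field_simp
              ring
            have h0 := hCS _ hc
            rw [map_sub, map_smul] at h0
            simp only [smul_eq_mul] at h0
            have h3 : fderiv ℝ (fderiv ℝ L) v d u
                = fderiv ℝ L v u / fderiv ℝ L v z₀ * fderiv ℝ (fderiv ℝ L) v d z₀ := by
              linarith [h0]
            rw [h3]; ring
          have hnd := hg_nondeg v hv hv0
            (d - (fderiv ℝ (fderiv ℝ L) v d z₀ / fderiv ℝ L v z₀) • v) ?_
          · exact sub_eq_zero.1 hnd
          · intro u'
            rw [hfund, map_sub, map_smul]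
            simp only [ContinuousLinearMap.sub_apply, ContinuousLinearMap.coe_smul',
              Pi.smul_apply, smul_eq_mul]
            rw [hE2 v hvA u', hlin u']
            ring
      obtain ⟨lam, hdlam⟩ := hlam
      have hw_eq : w = (1 + lam) • v := by
        have : w = v + d := by rw [hd]; abel
        rw [this, hdlam, add_smul, one_smul]
      refine ⟨1 + lam, ?_, hw_eq⟩
      by_contra hneg
      push_neg at hneg
      have hwne : w ≠ 0 := hw0
      have hnegw : -w ∈ closure A := by
        have : -(1 + lam) • v ∈ closure A := hK v hv.1 (-(1 + lam)) (by linarith)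
        rwa [neg_smul, ← hw_eq] at this
      exact hwne (hA_salient w hwcl hnegw)
    · rintro ⟨t, ht, rfl⟩
      rcases eq_or_lt_of_le ht with h0 | hpos
      · constructor
        · rw [← h0, zero_smul]; exact h0cl
        · rw [← h0, zero_smul, hfund]
          simp
      · constructor
        · exact hK v hv.1 t hpos
        · rw [hfund, hE2 v hvA, map_smul]
          simp only [smul_eq_mul]
          rw [hE1 v hvA, hLv]
          ring
end

section
/- Define F := √L on Â. Then F satisfies the reverse triangle inequality: F(v + w) ≥ F(v) + F(w) for all v, w ∈ Â (note that v + w ∈ Â, since Ā is a convex salient cone). -/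
open Set

/-- Proposition 2.3(i): `F := √L` satisfies the reverse triangle inequality
`F(v + w) ≥ F(v) + F(w)` for causal vectors `v, w` (note `v + w` is again causal,
since the closure of `A` is a convex salient cone). -/
theorem finsler_reverse_triangle_inequality
    {V : Type} [NormedAddCommGroup V] [NormedSpace ℝ V] [FiniteDimensional ℝ V]
    {n : ℕ} (hn : 2 ≤ n) (hdim : Module.finrank ℝ V = n)
    (A : Set V) (hA_open : IsOpen A) (hA_ne : A.Nonempty)
    (hA0 : (0 : V) ∉ A) (hA_conv : Convex ℝ A)
    (hA_cone : ∀ v ∈ A, ∀ t : ℝ, 0 < t → t • v ∈ A)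
    (hA_salient : ∀ v : V, v ∈ closure A → -v ∈ closure A → v = 0)
    (Astar : Set V) (hAstar_open : IsOpen Astar) (hAstar0 : (0 : V) ∉ Astar)
    (hAstar_cone : ∀ v ∈ Astar, ∀ t : ℝ, 0 < t → t • v ∈ Astar)
    (hAhat_sub : closure A \ {0} ⊆ Astar)
    (L : V → ℝ)
    (hL_smooth : ∀ v ∈ Astar, ContDiffAt ℝ (⊤ : ℕ∞) L v)
    (hL_homog : ∀ v ∈ Astar, ∀ t : ℝ, 0 < t → L (t • v) = t ^ 2 * L v)
    (hL_pos : ∀ v ∈ A, 0 < L v)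
    (hL_null : ∀ v ∈ closure A \ A, v ≠ 0 → L v = 0)
    (hL_conv : Convex ℝ {v ∈ A | 1 ≤ L v})
    (v : V) (hv : v ∈ closure A \ {0}) (w : V) (hw : w ∈ closure A \ {0}) :
    Real.sqrt (L v) + Real.sqrt (L w) ≤ Real.sqrt (L (v + w)) := by
  -- A ⊆ Astar
  have hA_sub_star : A ⊆ Astar := fun x hx =>
    hAhat_sub ⟨subset_closure hx, fun h => hA0 (by simpa [mem_singleton_iff.mp h] using hx)⟩
  -- A is closed under addition
  have hadd : ∀ x ∈ A, ∀ y ∈ A, x + y ∈ A := by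
    intro x hx y hy
    have h := hA_conv hx hy (by norm_num : (0:ℝ) ≤ 1/2) (by norm_num : (0:ℝ) ≤ 1/2)
      (by norm_num)
    have h2 := hA_cone _ h 2 (by norm_num)
    have he : (2:ℝ) • ((1/2:ℝ) • x + (1/2:ℝ) • y) = x + y := by module
    rwa [he] at h2
  -- closure A + A ⊆ A
  have hclosure_add : ∀ x ∈ closure A, ∀ a ∈ A, x + a ∈ A := by
    intro x hx a ha
    have hint : a ∈ interior A := by rwa [hA_open.interior_eq]
    have h := hA_conv.combo_interior_closure_mem_interior hint hx
      (by norm_num : (0:ℝ) < 1/2) (by norm_num : (0:ℝ) ≤ 1/2) (by norm_num)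
    rw [hA_open.interior_eq] at h
    have h2 := hA_cone _ h 2 (by norm_num)
    have he : (2:ℝ) • ((1/2:ℝ) • a + (1/2:ℝ) • x) = x + a := by module
    rwa [he] at h2
  -- closure A is a cone
  have hclosure_cone : ∀ z ∈ closure A, ∀ t : ℝ, 0 < t → t • z ∈ closure A := by
    intro z hz t ht
    exact map_mem_closure (continuous_const_smul t) hz (fun u hu => hA_cone u hu t ht)
  -- key superadditivity on A
  have key : ∀ x ∈ A, ∀ y ∈ A, Real.sqrt (L x) + Real.sqrt (L y) ≤ Real.sqrt (L (x + y)) := by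
    intro x hx y hy
    have hLx := hL_pos x hx
    have hLy := hL_pos y hy
    set α := Real.sqrt (L x) with hαdef
    set β := Real.sqrt (L y) with hβdef
    have hα : 0 < α := Real.sqrt_pos.mpr hLx
    have hβ : 0 < β := Real.sqrt_pos.mpr hLy
    have hαβ : 0 < α + β := by linarith
    have hx' : α⁻¹ • x ∈ A := hA_cone x hx _ (inv_pos.mpr hα)
    have hy' : β⁻¹ • y ∈ A := hA_cone y hy _ (inv_pos.mpr hβ)
    have hLx' : (1:ℝ) ≤ L (α⁻¹ • x) := by
      rw [hL_homog x (hA_sub_star hx) _ (inv_pos.mpr hα)]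
      have : α ^ 2 = L x := Real.sq_sqrt hLx.le
      rw [inv_pow, this]
      rw [inv_mul_cancel₀ (ne_of_gt hLx)]
    have hLy' : (1:ℝ) ≤ L (β⁻¹ • y) := by
      rw [hL_homog y (hA_sub_star hy) _ (inv_pos.mpr hβ)]
      have : β ^ 2 = L y := Real.sq_sqrt hLy.le
      rw [inv_pow, this]
      rw [inv_mul_cancel₀ (ne_of_gt hLy)]
    have hmem := hL_conv (x := α⁻¹ • x) (y := β⁻¹ • y) ⟨hx', hLx'⟩ ⟨hy', hLy'⟩
      (a := α / (α + β)) (b := β / (α + β))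
      (by positivity) (by positivity) (by field_simp)
    have he : (α / (α + β)) • α⁻¹ • x + (β / (α + β)) • β⁻¹ • y
        = (α + β)⁻¹ • (x + y) := by
      rw [smul_smul, smul_smul, smul_add]
      congr 1
      · congr 1; field_simp
      · congr 1; field_simp
    rw [he] at hmem
    have hxy : x + y ∈ A := hadd x hx y hy
    have hL1 : (1:ℝ) ≤ ((α + β)⁻¹) ^ 2 * L (x + y) := by
      have := hmem.2
      rwa [hL_homog (x + y) (hA_sub_star hxy) _ (inv_pos.mpr hαβ)] at this
    have hfin : (α + β) ^ 2 ≤ L (x + y) := by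
      have h2 : ((α + β) ^ 2) * 1 ≤ ((α + β) ^ 2) * (((α + β)⁻¹) ^ 2 * L (x + y)) := by
        apply mul_le_mul_of_nonneg_left hL1 (by positivity)
      calc (α + β) ^ 2 = ((α + β) ^ 2) * 1 := by ring
        _ ≤ ((α + β) ^ 2) * (((α + β)⁻¹) ^ 2 * L (x + y)) := h2
        _ = L (x + y) := by field_simp
    calc α + β = Real.sqrt ((α + β) ^ 2) := (Real.sqrt_sq hαβ.le).symm
      _ ≤ Real.sqrt (L (x + y)) := Real.sqrt_le_sqrt hfin
  -- approximate with timelike vectors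
  obtain ⟨a, ha⟩ := hA_ne
  have hv_ne : v ≠ 0 := fun h => hv.2 (by simp [h])
  have hw_ne : w ≠ 0 := fun h => hw.2 (by simp [h])
  have hvw_closure : v + w ∈ closure A := by
    have h := hA_conv.closure hv.1 hw.1 (by norm_num : (0:ℝ) ≤ 1/2)
      (by norm_num : (0:ℝ) ≤ 1/2) (by norm_num)
    have h2 := hclosure_cone _ h 2 (by norm_num)
    have he : (2:ℝ) • ((1/2:ℝ) • v + (1/2:ℝ) • w) = v + w := by module
    rwa [he] at h2
  have hvw_ne : v + w ≠ 0 := by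
    intro h
    have hwv : -v ∈ closure A := by
      have : w = -v := by linear_combination (norm := module) h
      rw [this] at hw
      exact hw.1
    exact hv_ne (hA_salient v hv.1 hwv)
  have hcv : ContinuousAt L v := (hL_smooth v (hAhat_sub hv)).continuousAt
  have hcw : ContinuousAt L w := (hL_smooth w (hAhat_sub hw)).continuousAt
  have hcvw : ContinuousAt L (v + w) :=
    (hL_smooth (v + w) (hAhat_sub ⟨hvw_closure, by simpa using hvw_ne⟩)).continuousAt
  -- tendsto statements as ε → 0⁺
  have tv : Filter.Tendsto (fun ε : ℝ => Real.sqrt (L (v + ε • a))) (nhdsWithin 0 (Ioi 0))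
      (nhds (Real.sqrt (L v))) := by
    have hlin : Filter.Tendsto (fun ε : ℝ => v + ε • a) (nhds 0) (nhds v) := by
      have hc : Continuous (fun ε : ℝ => v + ε • a) :=
        continuous_const.add (continuous_id.smul continuous_const)
      simpa using hc.tendsto 0
    exact ((Real.continuous_sqrt.tendsto _).comp (Filter.Tendsto.comp hcv.tendsto hlin)).mono_left
      nhdsWithin_le_nhds
  have tw : Filter.Tendsto (fun ε : ℝ => Real.sqrt (L (w + ε • a))) (nhdsWithin 0 (Ioi 0))
      (nhds (Real.sqrt (L w))) := by
    have hlin : Filter.Tendsto (fun ε : ℝ => w + ε • a) (nhds 0) (nhds w) := by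
      have hc : Continuous (fun ε : ℝ => w + ε • a) :=
        continuous_const.add (continuous_id.smul continuous_const)
      simpa using hc.tendsto 0
    exact ((Real.continuous_sqrt.tendsto _).comp (Filter.Tendsto.comp hcw.tendsto hlin)).mono_left
      nhdsWithin_le_nhds
  have tvw : Filter.Tendsto (fun ε : ℝ => Real.sqrt (L (v + w + (2 * ε) • a)))
      (nhdsWithin 0 (Ioi 0)) (nhds (Real.sqrt (L (v + w)))) := by
    have hlin : Filter.Tendsto (fun ε : ℝ => v + w + (2 * ε) • a) (nhds 0)
        (nhds (v + w)) := by
      have hc : Continuous (fun ε : ℝ => v + w + (2 * ε) • a) :=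
        continuous_const.add ((continuous_const.mul continuous_id).smul continuous_const)
      simpa using hc.tendsto 0
    exact ((Real.continuous_sqrt.tendsto _).comp (Filter.Tendsto.comp hcvw.tendsto hlin)).mono_left
      nhdsWithin_le_nhds
  have hineq : ∀ ε ∈ Ioi (0:ℝ),
      Real.sqrt (L (v + ε • a)) + Real.sqrt (L (w + ε • a))
        ≤ Real.sqrt (L (v + w + (2 * ε) • a)) := by
    intro ε hε
    have hεa : ε • a ∈ A := hA_cone a ha ε hε
    have hx : v + ε • a ∈ A := hclosure_add v hv.1 _ hεa
    have hy : w + ε • a ∈ A := hclosure_add w hw.1 _ hεa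
    have h := key _ hx _ hy
    have he : v + ε • a + (w + ε • a) = v + w + (2 * ε) • a := by module
    rwa [he] at h
  exact le_of_tendsto_of_tendsto (tv.add tw) tvw
    (Filter.eventually_iff_exists_mem.mpr ⟨Ioi 0, self_mem_nhdsWithin, hineq⟩)
end

section
/- There exists an open conic set A** ⊆ V \ {0} with Â ⊆ A** ⊆ A* such that L(u) < 0 for every u ∈ A** \ Â; that is, after shrinking the conic neighborhood of the closed causal cone, the extension L is strictly negative outside the closed cone (this is the claim of Remark 2.4). -/
open Set
open Filter

section Aux

variable {V : Type} [NormedAddCommGroup V] [NormedSpace ℝ V]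

/-- The derivative of a positively 2-homogeneous function is positively 1-homogeneous. -/
lemma finsler_aux_fderiv_homog (Astar : Set V) (hAstar_open : IsOpen Astar)
    (hAstar_cone : ∀ v ∈ Astar, ∀ t : ℝ, 0 < t → t • v ∈ Astar)
    (L : V → ℝ) (hL_smooth : ∀ v ∈ Astar, ContDiffAt ℝ (⊤ : ℕ∞) L v)
    (hL_homog : ∀ v ∈ Astar, ∀ t : ℝ, 0 < t → L (t • v) = t ^ 2 * L v)
    {v : V} (hv : v ∈ Astar) {t : ℝ} (ht : 0 < t) :
    fderiv ℝ L (t • v) = t • fderiv ℝ L v := by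
  have hdiff : ∀ x ∈ Astar, DifferentiableAt ℝ L x := fun x hx =>
    (hL_smooth x hx).differentiableAt (by simp)
  have h1 : HasFDerivAt (fun x => L (t • x))
      ((fderiv ℝ L (t • v)).comp (t • (ContinuousLinearMap.id ℝ V))) v := by
    have hg : HasFDerivAt (fun x : V => t • x) (t • ContinuousLinearMap.id ℝ V) v :=
      (hasFDerivAt_id v).const_smul t
    exact ((hdiff _ (hAstar_cone v hv t ht)).hasFDerivAt).comp v hg
  have h2 : HasFDerivAt (fun x => t ^ 2 * L x) ((t ^ 2) • fderiv ℝ L v) v :=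
    ((hdiff v hv).hasFDerivAt).const_mul (t ^ 2)
  have heq : (fun x => L (t • x)) =ᶠ[nhds v] (fun x => t ^ 2 * L x) := by
    filter_upwards [hAstar_open.mem_nhds hv] with x hx using hL_homog x hx t ht
  have h1' : HasFDerivAt (fun x => t ^ 2 * L x)
      ((fderiv ℝ L (t • v)).comp (t • ContinuousLinearMap.id ℝ V)) v :=
    h1.congr_of_eventuallyEq heq.symm
  have hkey := h1'.unique h2
  have hcomp : (fderiv ℝ L (t • v)).comp (t • ContinuousLinearMap.id ℝ V)
      = t • fderiv ℝ L (t • v) := by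
    ext w
    simp [ContinuousLinearMap.smul_apply, (fderiv ℝ L (t • v)).map_smul]
  rw [hcomp] at hkey
  have h3 := congrArg (fun f : V →L[ℝ] ℝ => (t⁻¹ : ℝ) • f) hkey
  have ht2 : t⁻¹ * (t * t) = t := by field_simp
  simpa [smul_smul, inv_mul_cancel₀ ht.ne', pow_two, ht2] using h3

/-- Euler's relation for the second derivative: `D²L(v)(v,·) = DL(v)`. -/
lemma finsler_aux_euler_two (Astar : Set V) (hAstar_open : IsOpen Astar)
    (hAstar_cone : ∀ v ∈ Astar, ∀ t : ℝ, 0 < t → t • v ∈ Astar)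
    (L : V → ℝ) (hL_smooth : ∀ v ∈ Astar, ContDiffAt ℝ (⊤ : ℕ∞) L v)
    (hhomF : ∀ v ∈ Astar, ∀ t : ℝ, 0 < t → fderiv ℝ L (t • v) = t • fderiv ℝ L v)
    {v : V} (hv : v ∈ Astar) :
    fderiv ℝ (fderiv ℝ L) v v = fderiv ℝ L v := by
  have hcd : ContDiffOn ℝ (⊤ : ℕ∞) L Astar := fun x hx => (hL_smooth x hx).contDiffWithinAt
  have hF : ContDiffOn ℝ 1 (fderiv ℝ L) Astar :=
    hcd.fderiv_of_isOpen hAstar_open (WithTop.coe_le_coe.2 le_top)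
  have hFdiff : DifferentiableAt ℝ (fderiv ℝ L) v :=
    ((hF.differentiableOn one_ne_zero).differentiableAt (hAstar_open.mem_nhds hv))
  have hsm : HasDerivAt (fun s : ℝ => s • v) v 1 := by
    simpa using (hasDerivAt_id (1 : ℝ)).smul_const v
  have hFat : HasFDerivAt (fderiv ℝ L) (fderiv ℝ (fderiv ℝ L) v) ((1 : ℝ) • v) := by
    rw [one_smul]; exact hFdiff.hasFDerivAt
  have h1 : HasDerivAt (fun s : ℝ => fderiv ℝ L (s • v))
      (fderiv ℝ (fderiv ℝ L) v v) 1 := hFat.comp_hasDerivAt 1 hsm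
  have h2 : HasDerivAt (fun s : ℝ => s • fderiv ℝ L v) (fderiv ℝ L v) 1 := by
    simpa using (hasDerivAt_id (1 : ℝ)).smul_const (fderiv ℝ L v)
  have heq : (fun s : ℝ => fderiv ℝ L (s • v)) =ᶠ[nhds 1]
      (fun s : ℝ => s • fderiv ℝ L v) := by
    filter_upwards [Ioi_mem_nhds (zero_lt_one : (0:ℝ) < 1)] with s hs
    exact hhomF v hv s hs
  have h2' : HasDerivAt (fun s : ℝ => fderiv ℝ L (s • v)) (fderiv ℝ L v) 1 :=
    h2.congr_of_eventuallyEq heq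
  exact h1.unique h2'

/-- At a boundary point where `L` vanishes, directional derivatives into the cone
are nonnegative. -/
lemma finsler_aux_dir_nonneg (A : Set V) (hA_open : IsOpen A) (hA_conv : Convex ℝ A)
    (Astar : Set V)
    (L : V → ℝ) (hL_smooth : ∀ v ∈ Astar, ContDiffAt ℝ (⊤ : ℕ∞) L v)
    (hL_pos : ∀ v ∈ A, 0 < L v)
    {v : V} (hvc : v ∈ closure A) (hLv : L v = 0) (hvst : v ∈ Astar)
    {a : V} (ha : a ∈ A) :
    0 ≤ fderiv ℝ L v (a - v) := by
  have hpath : HasDerivAt (fun s : ℝ => L (v + s • (a - v))) (fderiv ℝ L v (a - v)) 0 := by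
    have hg : HasDerivAt (fun s : ℝ => v + s • (a - v)) (a - v) 0 := by
      simpa using ((hasDerivAt_id (0 : ℝ)).smul_const (a - v)).const_add v
    have hd : HasFDerivAt L (fderiv ℝ L v) (v + (0 : ℝ) • (a - v)) := by
      simpa using ((hL_smooth v hvst).differentiableAt (by simp)).hasFDerivAt
    exact hd.comp_hasDerivAt 0 hg
  rw [hasDerivAt_iff_tendsto_slope] at hpath
  have hmono : Tendsto (slope (fun s : ℝ => L (v + s • (a - v))) 0)
      (nhdsWithin 0 (Ioi 0)) (nhds (fderiv ℝ L v (a - v))) :=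
    hpath.mono_left (nhdsWithin_mono 0 (fun x hx => hx.ne'))
  refine ge_of_tendsto hmono ?_
  filter_upwards [Ioo_mem_nhdsGT_of_mem (⟨le_refl 0, zero_lt_one⟩ : (0:ℝ) ∈ Ico 0 1)]
    with s hs
  have hmem : v + s • (a - v) ∈ A := by
    have h := hA_conv.combo_interior_closure_mem_interior
      (by rwa [hA_open.interior_eq] : a ∈ interior A) hvc hs.1
      (by linarith [hs.2] : (0:ℝ) ≤ 1 - s) (by ring)
    rw [hA_open.interior_eq] at h
    convert h using 1
    module
  have hpos : 0 < L (v + s • (a - v)) := hL_pos _ hmem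
  have h0 : L (v + (0:ℝ) • (a - v)) = 0 := by simpa using hLv
  rw [slope_def_field, h0]
  apply div_nonneg (by linarith) (by linarith [hs.1])

/-- The key local statement: near a lightlike vector, `L` is negative outside the
closed cone. -/
lemma finsler_aux_local (A : Set V) (hA_open : IsOpen A) (hA_conv : Convex ℝ A)
    (Astar : Set V) (hAstar_open : IsOpen Astar) (hAstar0 : (0 : V) ∉ Astar)
    (L : V → ℝ) (hL_smooth : ∀ v ∈ Astar, ContDiffAt ℝ (⊤ : ℕ∞) L v)
    (hL_pos : ∀ v ∈ A, 0 < L v)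
    (hL_null : ∀ v ∈ closure A \ A, v ≠ 0 → L v = 0)
    {v w₀ : V} (hvst : v ∈ Astar) (hvc : v ∈ closure A)
    (hw₀A : v + w₀ ∈ A) (hw₀ : 0 < fderiv ℝ L v w₀) :
    ∃ η > 0, Metric.ball v η ⊆ Astar ∧
      ∀ u ∈ Metric.ball v η, u ∉ closure A → L u < 0 := by
  have hcd : ContDiffOn ℝ (⊤ : ℕ∞) L Astar := fun x hx => (hL_smooth x hx).contDiffWithinAt
  have hcont : ContinuousOn (fderiv ℝ L) Astar :=
    hcd.continuousOn_fderiv_of_isOpen hAstar_open (by simp)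
  have hev : ContinuousOn (fun x => fderiv ℝ L x w₀) Astar :=
    hcont.clm_apply continuousOn_const
  have hevat : ContinuousAt (fun x => fderiv ℝ L x w₀) v :=
    hev.continuousAt (hAstar_open.mem_nhds hvst)
  have hmemnhds : {x | 0 < fderiv ℝ L x w₀} ∩ Astar ∈ nhds v := by
    refine Filter.inter_mem ?_ (hAstar_open.mem_nhds hvst)
    exact hevat (Ioi_mem_nhds hw₀)
  obtain ⟨ρ, hρpos, hρball⟩ := Metric.mem_nhds_iff.1 hmemnhds
  set σ : ℝ := min (1/2) (ρ / (2 * (‖w₀‖ + 1))) with hσdef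
  have hσpos : 0 < σ := by
    apply lt_min (by norm_num)
    positivity
  have hσ1 : σ < 1 := lt_of_le_of_lt (min_le_left _ _) (by norm_num)
  have hσw : σ * ‖w₀‖ ≤ ρ / 2 := by
    have h1 : σ ≤ ρ / (2 * (‖w₀‖ + 1)) := min_le_right _ _
    have h2 : 0 ≤ ‖w₀‖ := norm_nonneg _
    calc σ * ‖w₀‖ ≤ (ρ / (2 * (‖w₀‖ + 1))) * ‖w₀‖ := by
          apply mul_le_mul_of_nonneg_right h1 h2
      _ ≤ ρ / 2 := by
          rw [div_mul_eq_mul_div, div_le_div_iff₀ (by positivity) (by norm_num)]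
          nlinarith
  have hbA : v + σ • w₀ ∈ A := by
    have h := hA_conv.combo_interior_closure_mem_interior
      (by rwa [hA_open.interior_eq] : v + w₀ ∈ interior A) hvc hσpos
      (by linarith : (0:ℝ) ≤ 1 - σ) (by ring)
    rw [hA_open.interior_eq] at h
    convert h using 1
    module
  obtain ⟨ε₁, hε₁pos, hε₁ball⟩ := Metric.isOpen_iff.1 hA_open _ hbA
  refine ⟨min ε₁ (ρ / 2), lt_min hε₁pos (by positivity), ?_, ?_⟩
  · intro x hx
    have : x ∈ Metric.ball v ρ := by
      refine Metric.mem_ball.2 (lt_of_lt_of_le (Metric.mem_ball.1 hx) ?_)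
      exact le_trans (min_le_right _ _) (by linarith)
    exact (hρball this).2
  intro u hu huc
  set η := min ε₁ (ρ / 2) with hηdef
  have hηε₁ : η ≤ ε₁ := min_le_left _ _
  have hηρ : η ≤ ρ / 2 := min_le_right _ _
  have huv : ‖u - v‖ < η := by rwa [Metric.mem_ball, dist_eq_norm] at hu
  set γ : ℝ → V := fun s => u + s • w₀ with hγdef
  have hball : ∀ s ∈ Icc (0:ℝ) σ, γ s ∈ Metric.ball v ρ := by
    intro s hs
    rw [Metric.mem_ball, dist_eq_norm]
    have : γ s - v = (u - v) + s • w₀ := by rw [hγdef]; module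
    rw [this]
    calc ‖(u - v) + s • w₀‖ ≤ ‖u - v‖ + ‖s • w₀‖ := norm_add_le _ _
      _ ≤ ‖u - v‖ + σ * ‖w₀‖ := by
          rw [norm_smul, Real.norm_eq_abs, abs_of_nonneg hs.1]
          have := mul_le_mul_of_nonneg_right hs.2 (norm_nonneg w₀)
          linarith
      _ < ρ := by linarith
  have hballst : ∀ s ∈ Icc (0:ℝ) σ, γ s ∈ Astar := fun s hs => (hρball (hball s hs)).2
  have hγσA : γ σ ∈ A := by
    apply hε₁ball
    rw [Metric.mem_ball, dist_eq_norm]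
    have : γ σ - (v + σ • w₀) = u - v := by rw [hγdef]; module
    rw [this]
    exact lt_of_lt_of_le huv hηε₁
  set T : Set ℝ := {s ∈ Icc (0:ℝ) σ | γ s ∈ closure A} with hTdef
  have hγcont : Continuous γ := by
    apply Continuous.add continuous_const
    exact continuous_id.smul continuous_const
  have hTclosed : IsClosed T := by
    have : T = Icc (0:ℝ) σ ∩ γ ⁻¹' (closure A) := rfl
    rw [this]
    exact isClosed_Icc.inter (isClosed_closure.preimage hγcont)
  have hTne : T.Nonempty := ⟨σ, ⟨⟨hσpos.le, le_refl σ⟩, subset_closure hγσA⟩⟩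
  have hTbdd : BddBelow T := ⟨0, fun s hs => hs.1.1⟩
  set s₀ : ℝ := sInf T with hs₀def
  have hs₀T : s₀ ∈ T := hTclosed.csInf_mem hTne hTbdd
  have hs₀Icc : s₀ ∈ Icc (0:ℝ) σ := hs₀T.1
  have hs₀pos : 0 < s₀ := by
    rcases lt_or_eq_of_le hs₀Icc.1 with h | h
    · exact h
    · exfalso; apply huc
      have : γ s₀ ∈ closure A := hs₀T.2
      rw [← h] at this
      simpa [hγdef] using this
  have hs₀notA : γ s₀ ∉ A := by
    intro hmem
    have hev : ∀ᶠ s in nhds s₀, γ s ∈ A := hγcont.continuousAt (hA_open.mem_nhds hmem)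
    obtain ⟨δ, hδpos, hδ⟩ := Metric.eventually_nhds_iff.1 hev
    have h1 : 0 < min (δ / 2) (s₀ / 2) := lt_min (by linarith) (by linarith)
    have h2 : min (δ / 2) (s₀ / 2) ≤ δ / 2 := min_le_left _ _
    have h3 : min (δ / 2) (s₀ / 2) ≤ s₀ / 2 := min_le_right _ _
    set s₁ : ℝ := s₀ - min (δ / 2) (s₀ / 2) with hs₁def
    have hs₁lt : s₁ < s₀ := by rw [hs₁def]; linarith
    have hs₁pos : 0 < s₁ := by rw [hs₁def]; linarith
    have hs₁T : s₁ ∈ T := by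
      refine ⟨⟨hs₁pos.le, le_trans hs₁lt.le hs₀Icc.2⟩, subset_closure (hδ ?_)⟩
      rw [Real.dist_eq, hs₁def, abs_of_nonpos (by linarith)]
      linarith
    exact absurd (csInf_le hTbdd hs₁T) (not_le.2 hs₁lt)
  have hγs₀ne : γ s₀ ≠ 0 := by
    intro h0
    apply hAstar0
    rw [← h0]
    exact hballst s₀ hs₀Icc
  have hLs₀ : L (γ s₀) = 0 := hL_null _ ⟨hs₀T.2, hs₀notA⟩ hγs₀ne
  set g : ℝ → ℝ := fun s => L (γ s) with hgdef
  have hgderiv : ∀ s ∈ Icc (0:ℝ) σ, HasDerivAt g (fderiv ℝ L (γ s) w₀) s := by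
    intro s hs
    have hγd : HasDerivAt γ w₀ s := by
      have : HasDerivAt (fun r : ℝ => u + r • w₀) ((1:ℝ) • w₀) s :=
        ((hasDerivAt_id s).smul_const w₀).const_add u
      rw [one_smul] at this; exact this
    have hLd : HasFDerivAt L (fderiv ℝ L (γ s)) (γ s) :=
      ((hL_smooth _ (hballst s hs)).differentiableAt (by simp)).hasFDerivAt
    exact hLd.comp_hasDerivAt s hγd
  have hgcont : ContinuousOn g (Icc 0 σ) := fun s hs =>
    ((hgderiv s hs).continuousAt).continuousWithinAt
  have hgmono : StrictMonoOn g (Icc 0 σ) := by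
    apply strictMonoOn_of_deriv_pos (convex_Icc 0 σ) hgcont
    intro s hs
    rw [interior_Icc] at hs
    rw [(hgderiv s ⟨hs.1.le, hs.2.le⟩).deriv]
    exact (hρball (hball s ⟨hs.1.le, hs.2.le⟩)).1
  have hfin : g 0 < g s₀ := hgmono ⟨le_refl 0, hσpos.le⟩ hs₀Icc hs₀pos
  have hg0 : g 0 = L u := by simp [hgdef, hγdef]
  have hg1 : g s₀ = 0 := hLs₀
  rw [hg0, hg1] at hfin
  exact hfin

end Aux

/-- Remark 2.4: after shrinking the conic open neighbourhood `A*` of the closed causal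
cone, the extension `L` is strictly negative outside the closed cone: there is an open
conic set `A**` with `Â ⊆ A** ⊆ A*` and `L < 0` on `A** \ Â`. -/
theorem finsler_L_negative_outside_cone
    {V : Type} [NormedAddCommGroup V] [NormedSpace ℝ V] [FiniteDimensional ℝ V]
    {n : ℕ} (hn : 2 ≤ n) (hdim : Module.finrank ℝ V = n)
    (A : Set V) (hA_open : IsOpen A) (hA_ne : A.Nonempty)
    (hA0 : (0 : V) ∉ A) (hA_conv : Convex ℝ A)
    (hA_cone : ∀ v ∈ A, ∀ t : ℝ, 0 < t → t • v ∈ A)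
    (hA_salient : ∀ v : V, v ∈ closure A → -v ∈ closure A → v = 0)
    (Astar : Set V) (hAstar_open : IsOpen Astar) (hAstar0 : (0 : V) ∉ Astar)
    (hAstar_cone : ∀ v ∈ Astar, ∀ t : ℝ, 0 < t → t • v ∈ Astar)
    (hAhat_sub : closure A \ {0} ⊆ Astar)
    (L : V → ℝ)
    (hL_smooth : ∀ v ∈ Astar, ContDiffAt ℝ (⊤ : ℕ∞) L v)
    (hL_homog : ∀ v ∈ Astar, ∀ t : ℝ, 0 < t → L (t • v) = t ^ 2 * L v)
    (hL_pos : ∀ v ∈ A, 0 < L v)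
    (hL_null : ∀ v ∈ closure A \ A, v ≠ 0 → L v = 0)
    (hL_conv : Convex ℝ {v ∈ A | 1 ≤ L v})
    (hg_nondeg : ∀ v ∈ closure A \ A, v ≠ 0 →
      ∀ u : V, (∀ w : V, fundamentalTensor L v u w = 0) → u = 0)
    : ∃ Astar2 : Set V, IsOpen Astar2 ∧
    (∀ v ∈ Astar2, ∀ t : ℝ, 0 < t → t • v ∈ Astar2) ∧
    closure A \ {0} ⊆ Astar2 ∧ Astar2 ⊆ Astar ∧
    ∀ u ∈ Astar2, u ∉ closure A \ {0} → L u < 0 := by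
  classical
  set S : Set V := (closure A \ {0}) ∪ {u ∈ Astar | L u < 0} with hSdef
  have hS_sub : S ⊆ Astar := by
    rintro u (h | h)
    · exact hAhat_sub h
    · exact h.1
  have hS_cone : ∀ u ∈ S, ∀ t : ℝ, 0 < t → t • u ∈ S := by
    rintro u (h | h) t ht
    · left
      constructor
      · have h1 : (fun x : V => t • x) '' closure A ⊆ closure ((fun x : V => t • x) '' A) :=
          image_closure_subset_closure_image (continuous_const_smul t)
        have h2 : (fun x : V => t • x) '' A ⊆ A := by
          rintro y ⟨x, hx, rfl⟩
          exact hA_cone x hx t ht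
        exact (closure_mono h2) (h1 ⟨u, h.1, rfl⟩)
      · simp only [mem_singleton_iff] at h ⊢
        exact smul_ne_zero ht.ne' h.2
    · right
      refine ⟨hAstar_cone u h.1 t ht, ?_⟩
      rw [hL_homog u h.1 t ht]
      exact mul_neg_of_pos_of_neg (pow_pos ht 2) h.2
  have hAS : A ⊆ S := fun a ha => Or.inl ⟨subset_closure ha, by
    simp only [mem_singleton_iff]
    rintro rfl
    exact hA0 ha⟩
  refine ⟨interior S, isOpen_interior, ?_, ?_, interior_subset.trans hS_sub, ?_⟩
  · -- conic
    intro u hu t ht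
    have h1 : (fun x : V => t • x) '' interior S ⊆ S := by
      rintro y ⟨x, hx, rfl⟩
      exact hS_cone x (interior_subset hx) t ht
    have h2 : IsOpen ((fun x : V => t • x) '' interior S) :=
      isOpenMap_smul₀ ht.ne' _ isOpen_interior
    exact interior_maximal h1 h2 ⟨u, hu, rfl⟩
  · -- closure A \ {0} ⊆ interior S
    rintro v ⟨hvc, hv0'⟩
    have hv0 : v ≠ 0 := hv0'
    by_cases hvA : v ∈ A
    · exact interior_maximal hAS hA_open hvA
    · have hvst : v ∈ Astar := hAhat_sub ⟨hvc, hv0'⟩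
      have hLv0 : L v = 0 := hL_null v ⟨hvc, hvA⟩ hv0
      have hhomF : ∀ x ∈ Astar, ∀ t : ℝ, 0 < t →
          fderiv ℝ L (t • x) = t • fderiv ℝ L x := fun x hx t ht =>
        finsler_aux_fderiv_homog Astar hAstar_open hAstar_cone L hL_smooth hL_homog hx ht
      have heuler := finsler_aux_euler_two Astar hAstar_open hAstar_cone L hL_smooth
        hhomF hvst
      have hφne : fderiv ℝ L v ≠ 0 := by
        intro h0
        apply hv0
        apply hg_nondeg v ⟨hvc, hvA⟩ hv0 v
        intro w
        have hval : iteratedFDeriv ℝ 2 L v ![v, w] = fderiv ℝ (fderiv ℝ L) v v w := by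
          rw [iteratedFDeriv_two_apply]
          simp
        rw [fundamentalTensor, hval, heuler, h0]
        simp
      have hnonneg : ∀ a ∈ A, 0 ≤ fderiv ℝ L v (a - v) := fun a ha =>
        finsler_aux_dir_nonneg A hA_open hA_conv Astar L hL_smooth hL_pos hvc hLv0 hvst ha
      have hex : ∃ a ∈ A, 0 < fderiv ℝ L v (a - v) := by
        by_contra hcon
        push_neg at hcon
        have hzero : ∀ a ∈ A, fderiv ℝ L v (a - v) = 0 := fun a ha =>
          le_antisymm (hcon a ha) (hnonneg a ha)
        apply hφne
        ext x
        simp only [ContinuousLinearMap.zero_apply]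
        obtain ⟨a₀, ha₀⟩ := hA_ne
        obtain ⟨ε, hεpos, hεball⟩ := Metric.isOpen_iff.1 hA_open a₀ ha₀
        by_cases hx0 : x = 0
        · simp [hx0]
        have hxn : 0 < ‖x‖ := norm_pos_iff.2 hx0
        have hδpos : 0 < ε / (2 * ‖x‖) := by positivity
        have hmem : a₀ + (ε / (2 * ‖x‖)) • x ∈ A := by
          apply hεball
          rw [Metric.mem_ball, dist_eq_norm]
          have harg : a₀ + (ε / (2 * ‖x‖)) • x - a₀ = (ε / (2 * ‖x‖)) • x := by module
          rw [harg, norm_smul, Real.norm_eq_abs, abs_of_pos hδpos]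
          rw [div_mul_eq_mul_div, mul_comm (2:ℝ) ‖x‖, ← div_div, mul_div_assoc,
            div_self hxn.ne']
          linarith
        have h1 := hzero _ hmem
        have h2 := hzero _ ha₀
        have hcomb : fderiv ℝ L v (a₀ + (ε / (2 * ‖x‖)) • x - v)
            - fderiv ℝ L v (a₀ - v) = (ε / (2 * ‖x‖)) * fderiv ℝ L v x := by
          rw [← map_sub]
          have harg : (a₀ + (ε / (2 * ‖x‖)) • x - v) - (a₀ - v)
              = (ε / (2 * ‖x‖)) • x := by module
          rw [harg, map_smul, smul_eq_mul]
        rw [h1, h2] at hcomb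
        have hzx : (ε / (2 * ‖x‖)) * fderiv ℝ L v x = 0 := by linarith
        exact (mul_eq_zero.1 hzx).resolve_left hδpos.ne'
      obtain ⟨a, haA, haφ⟩ := hex
      have hwA : v + (a - v) ∈ A := by
        have : v + (a - v) = a := by abel
        rw [this]; exact haA
      obtain ⟨η, hηpos, hηsub, hηclaim⟩ := finsler_aux_local A hA_open hA_conv Astar
        hAstar_open hAstar0 L hL_smooth hL_pos hL_null hvst hvc hwA haφ
      apply mem_interior.2 ⟨Metric.ball v η, ?_, Metric.isOpen_ball,
        Metric.mem_ball_self hηpos⟩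
      intro u hu
      by_cases huc : u ∈ closure A
      · left
        refine ⟨huc, ?_⟩
        simp only [mem_singleton_iff]
        intro h0
        apply hAstar0
        rw [← h0]
        exact hηsub hu
      · right
        exact ⟨hηsub hu, hηclaim u hu huc⟩
  · -- negativity
    intro u hu hnotin
    rcases interior_subset hu with h | h
    · exact absurd h hnotin
    · exact h.2
end

section
/- Let z ∈ V with z ≠ 0 and g(z,z) = 0, and let B be a symmetric bilinear form on V satisfying B(z,u) = 0 for all u ∈ V. If e₃, …, e_n ∈ V are vectors with g(e_i,e_j) = −δ_{ij} and g(z,e_i) = 0 for all i, j ∈ {3,…,n}, then the g-trace of B equals −∑_{i=3}^{n} B(e_i,e_i) (this is the computational content of Lemma 4.1, expressing the Ricci scalar along a lightlike direction as minus the sum over a spacelike orthonormal completion). -/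
/-!
Nondegeneracy of `g` gives a null vector `w` with `g z w = 1` that is `g`-orthogonal to the `eᵢ`.
Then `(z, w, e)` is a basis whose `g`-dual family is `(w, z, -e)`, so
`tr T = g(w, T z) + g(z, T w) - ∑ g(eᵢ, T eᵢ) = B(z, w) + B(w, z) - ∑ B(eᵢ, eᵢ)`,
and the first two terms vanish because `B(z, ·) = 0` and `B` is symmetric.
-/

open Module

namespace LinearMap.BilinForm

variable {K V ι : Type*} [Field K] [AddCommGroup V] [Module K V] (g : LinearMap.BilinForm K V)

theorem linearIndependent_of_biorthogonal [DecidableEq ι] {b d : ι → V}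
    (hdb : ∀ i j, g (d i) (b j) = if i = j then 1 else 0) : LinearIndependent K b := by
  refine LinearIndependent.of_comp (LinearMap.pi fun i ↦ g (d i)) ?_
  have hcomp : ⇑(LinearMap.pi fun i ↦ g (d i)) ∘ b = fun j ↦ Pi.single j (1 : K) := by
    ext j i
    simp [hdb, Pi.single_apply]
  rw [hcomp]
  exact Pi.linearIndependent_single_one ι K

theorem trace_eq_sum_of_biorthogonal [FiniteDimensional K V] [Fintype ι] [DecidableEq ι]
    {b d : ι → V} (hdb : ∀ i j, g (d i) (b j) = if i = j then 1 else 0)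
    (hcard : Fintype.card ι = finrank K V) (T : V →ₗ[K] V) :
    trace K V T = ∑ i, g (d i) (T (b i)) := by
  set β := basisOfLinearIndependentOfCardEqFinrank' b (g.linearIndependent_of_biorthogonal hdb) hcard
  have hβ : ⇑β = b := coe_basisOfLinearIndependentOfCardEqFinrank' ..
  clear_value β
  subst hβ
  have hcoord : ∀ i, g (d i) = β.coord i := fun i ↦
    β.ext fun j ↦ by simp [hdb, Finsupp.single_apply, eq_comm]
  simp [trace_eq_matrix_trace K β, Matrix.trace, LinearMap.toMatrix_apply, hcoord]

theorem exists_isotropic_partner [NeZero (2 : K)] [Fintype ι] [DecidableEq ι]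
    (hg : ∀ u w, g u w = g w u) (hnd : g.SeparatingLeft)
    {z : V} (hz0 : z ≠ 0) (hzz : g z z = 0)
    {e : ι → V} (he : ∀ i j, g (e i) (e j) = if i = j then -1 else 0) (hze : ∀ i, g z (e i) = 0) :
    ∃ w, g z w = 1 ∧ g w w = 0 ∧ ∀ i, g w (e i) = 0 := by
  obtain ⟨u, hu⟩ : ∃ u, g z u = 1 := by
    obtain ⟨v, hv⟩ : ∃ v, g z v ≠ 0 := by
      by_contra! h
      exact hz0 (hnd z h)
    exact ⟨(g z v)⁻¹ • v, by simp [hv]⟩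
  -- project `u` off the `eᵢ`, then add a multiple of `z` to make it null
  set u' := u + ∑ i, g u (e i) • e i
  have hzu' : g z u' = 1 := by simp [u', hze, hu]
  have hu'e : ∀ j, g u' (e j) = 0 := fun j ↦ by simp [u', he]
  refine ⟨u' - (g u' u' / 2) • z, ?_, ?_, fun j ↦ ?_⟩
  · simp [hzz, hzu']
  · simp only [map_sub, map_smul, LinearMap.sub_apply, LinearMap.smul_apply, smul_eq_mul, hzz,
      hzu', hg u' z]
    field_simp
    ring
  · simp [hze, hu'e]

theorem biorthogonal_hyperbolic_completion [DecidableEq ι] (hg : ∀ u w, g u w = g w u)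
    {z w : V} {e : ι → V} (hzz : g z z = 0) (hww : g w w = 0) (hzw : g z w = 1)
    (he : ∀ i j, g (e i) (e j) = if i = j then -1 else 0) (hze : ∀ i, g z (e i) = 0)
    (hwe : ∀ i, g w (e i) = 0) (i j : Fin 2 ⊕ ι) :
    g (Sum.elim ![w, z] (-e) i) (Sum.elim ![z, w] e j) = if i = j then 1 else 0 := by
  have hez : ∀ i, g (e i) z = 0 := fun i ↦ hg z (e i) ▸ hze i
  have hew : ∀ i, g (e i) w = 0 := fun i ↦ hg w (e i) ▸ hwe i
  rcases i with i | i <;> rcases j with j | j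
  · fin_cases i <;> fin_cases j <;> simp [hzz, hww, hzw, hg w z]
  · fin_cases i <;> simp [hze, hwe]
  · fin_cases j <;> simp [hez, hew]
  · by_cases hij : i = j <;> simp [he, hij]

end LinearMap.BilinForm

open LinearMap.BilinForm in
/-- Lemma 4.1 (computational content): in a Lorentzian vector space `(V, g)`, if `z` is
a nonzero `g`-null vector, `B` is a symmetric bilinear form with `B(z,·) = 0`, and
`e₃, …, e_n` is a `g`-orthonormal spacelike family `g`-orthogonal to `z`, then the
`g`-trace of `B` (the trace of the endomorphism `T` with `g(T u, w) = B(u,w)`) equals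
`-∑ᵢ B(eᵢ, eᵢ)`. -/
theorem lorentz_trace_along_null_direction
    {V : Type} [AddCommGroup V] [Module ℝ V] [FiniteDimensional ℝ V]
    {n : ℕ} (hn : 2 ≤ n) (hdim : Module.finrank ℝ V = n)
    (g : V →ₗ[ℝ] V →ₗ[ℝ] ℝ) (hg_symm : ∀ u w : V, g u w = g w u)
    (f : Module.Basis (Fin n) ℝ V)
    (hf : ∀ i j : Fin n, g (f i) (f j) =
      if i = j then (if (i : ℕ) = 0 then 1 else -1) else 0)
    (z : V) (hz0 : z ≠ 0) (hzz : g z z = 0)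
    (B : V →ₗ[ℝ] V →ₗ[ℝ] ℝ) (hB_symm : ∀ u w : V, B u w = B w u)
    (hBz : ∀ u : V, B z u = 0)
    (e : Fin (n - 2) → V)
    (he : ∀ i j : Fin (n - 2), g (e i) (e j) = if i = j then -1 else 0)
    (hze : ∀ i : Fin (n - 2), g z (e i) = 0)
    (T : V →ₗ[ℝ] V) (hT : ∀ u w : V, g (T u) w = B u w) :
    LinearMap.trace ℝ V T = -∑ i : Fin (n - 2), B (e i) (e i) := by
  have hnd : g.Nondegenerate :=
    (iIsOrtho.nondegenerate_iff_not_isOrtho_basis_self g f fun i j hij ↦ (hf i j).trans (if_neg hij)).2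
      fun i ↦ by rw [hf, if_pos rfl]; split_ifs <;> norm_num
  obtain ⟨w, hzw, hww, hwe⟩ := exists_isotropic_partner g hg_symm hnd.1 hz0 hzz he hze
  have hcard : Fintype.card (Fin 2 ⊕ Fin (n - 2)) = Module.finrank ℝ V := by
    simp [hdim]; omega
  rw [trace_eq_sum_of_biorthogonal g
    (biorthogonal_hyperbolic_completion g hg_symm hzz hww hzw he hze hwe) hcard]
  simp [Fintype.sum_sum_type, hg_symm _ (T _), hT, hBz, hB_symm _ z]
end
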